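/- arXiv:2009.14106 — 9 statements merged into one kernel-verified Lean document; each statement's English description precedes it below -/
import Mathlib

section
/- Let f : [0,1] → [0,1] be an increasing homeomorphism. If there exists a Borel set N ⊆ [0,1] with Lebesgue measure zero such that f(N) has Lebesgue measure 1, then the 1-dimensional Hausdorff measure of the graph of f is at least 2. -/
open MeasureTheory Set

/-! Orthogonal projections to the axes are 1-Lipschitz, so they do not increase `μH[1]`, which is
Lebesgue measure on `ℝ`. The part of the graph over `N` projects onto `f '' N` on the `y`-axis, and
the part over `[0,1] \ N` projects onto that set, of measure `1`, on the `x`-axis. -/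

def graphPoint (f : ℝ → ℝ) (x : ℝ) : EuclideanSpace ℝ (Fin 2) :=
  (WithLp.equiv 2 (Fin 2 → ℝ)).symm ![x, f x]

theorem EuclideanSpace.lipschitzWith_apply {ι : Type*} [Fintype ι] (i : ι) :
    LipschitzWith 1 (fun p : EuclideanSpace ℝ ι => p i) :=
  LipschitzWith.of_edist_le fun x y => PiLp.edist_apply_le x y i

theorem EuclideanSpace.volume_image_apply_le_hausdorffMeasure {ι : Type*} [Fintype ι] (i : ι)
    (s : Set (EuclideanSpace ℝ ι)) : volume ((fun p => p i) '' s) ≤ μH[1] s := by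
  simpa [hausdorffMeasure_real] using
    (EuclideanSpace.lipschitzWith_apply i).hausdorffMeasure_image_le zero_le_one s

theorem volume_le_hausdorffMeasure_image_graphPoint (f : ℝ → ℝ) (A : Set ℝ) :
    volume A ≤ μH[1] (graphPoint f '' A) := by
  simpa [image_image, graphPoint] using
    EuclideanSpace.volume_image_apply_le_hausdorffMeasure 0 (graphPoint f '' A)

theorem volume_image_le_hausdorffMeasure_image_graphPoint (f : ℝ → ℝ) (A : Set ℝ) :
    volume (f '' A) ≤ μH[1] (graphPoint f '' A) := by
  simpa [image_image, graphPoint] using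
    EuclideanSpace.volume_image_apply_le_hausdorffMeasure 1 (graphPoint f '' A)

theorem hausdorffMeasure_image_graphPoint_eq_add (f : ℝ → ℝ) (A : Set ℝ) {N : Set ℝ}
    (hN : MeasurableSet N) :
    μH[1] (graphPoint f '' A) =
      μH[1] (graphPoint f '' (A ∩ N)) + μH[1] (graphPoint f '' (A \ N)) := by
  have hpre : graphPoint f ⁻¹' ((fun p => p 0) ⁻¹' N) = N := rfl
  rw [← hpre, image_inter_preimage, image_sdiff_preimage]
  exact (measure_inter_add_sdiff _
    ((EuclideanSpace.lipschitzWith_apply 0).continuous.measurable hN)).symm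

theorem stmt2_general (f : ℝ → ℝ)
    (N : Set ℝ) (hNsub : N ⊆ Icc 0 1) (hNmeas : MeasurableSet N)
    (hN0 : volume N = 0) (hN1 : volume (f '' N) = 1) :
    2 ≤ Measure.hausdorffMeasure 1
      {p : EuclideanSpace ℝ (Fin 2) | ∃ x ∈ Icc (0 : ℝ) 1,
        p = (WithLp.equiv 2 (Fin 2 → ℝ)).symm ![x, f x]} := by
  have hgraph : {p : EuclideanSpace ℝ (Fin 2) | ∃ x ∈ Icc (0 : ℝ) 1,
      p = (WithLp.equiv 2 (Fin 2 → ℝ)).symm ![x, f x]} = graphPoint f '' Icc 0 1 := by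
    ext p
    simp [graphPoint, eq_comm]
  have hcompl : volume (Icc (0 : ℝ) 1 \ N) = 1 := by
    simp [measure_sdiff_null hN0]
  rw [hgraph, hausdorffMeasure_image_graphPoint_eq_add f _ hNmeas, inter_eq_right.2 hNsub]
  calc (2 : ENNReal) = volume (f '' N) + volume (Icc 0 1 \ N) := by
        rw [hN1, hcompl, one_add_one_eq_two]
    _ ≤ _ := add_le_add (volume_image_le_hausdorffMeasure_image_graphPoint f N)
        (volume_le_hausdorffMeasure_image_graphPoint f _)

/-- If an increasing homeomorphism `f` of `[0,1]` maps a Lebesgue null Borel set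
`N ⊆ [0,1]` to a set of measure `1`, then the 1-dimensional Hausdorff measure of
the graph of `f` (as a subset of the Euclidean plane) is at least `2`. -/
theorem stmt2 (f : ℝ → ℝ) (hc : ContinuousOn f (Icc 0 1))
    (hm : StrictMonoOn f (Icc 0 1)) (h0 : f 0 = 0) (h1 : f 1 = 1)
    (N : Set ℝ) (hNsub : N ⊆ Icc 0 1) (hNmeas : MeasurableSet N)
    (hN0 : volume N = 0) (hN1 : volume (f '' N) = 1) :
    2 ≤ Measure.hausdorffMeasure 1
      {p : EuclideanSpace ℝ (Fin 2) | ∃ x ∈ Icc (0 : ℝ) 1,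
        p = (WithLp.equiv 2 (Fin 2 → ℝ)).symm ![x, f x]} :=
  stmt2_general f N hNsub hNmeas hN0 hN1
end

section
/- Let H ⊆ ℝ^d be a Borel set and f : H → ℝ^d be Borel measurable. If f is differentiable at almost every x ∈ H with det f'(x) = 0, then for almost every x ∈ H, the ratio λ^d(f(B(x,r) ∩ H)) / λ^d(B(x,r)) tends to 0 as r → 0⁺. -/
/-!
At a point `x` where `f` has a singular derivative `L` within `H`, for every `ε > 0` and all small
`r` the set `f (B(x, r) ∩ H)` lies in `f x + r • K_ε`, where `K_ε` is the closed `ε`-thickening of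
the compact set `K = L (B(0, 1))`. Scaling by `r` multiplies Lebesgue measure by the same factor
`r ^ d` as it does for balls, so the ratio is at most `λ(K_ε) / λ(B(0, 1))`, and this tends to
`λ(K) / λ(B(0, 1)) = 0` as `ε → 0`, because a linear map of determinant zero sends every set to a
null set.
-/

open MeasureTheory Metric Set Filter Topology Pointwise

section

variable {E F : Type*} [NormedAddCommGroup E] [NormedSpace ℝ E]
  [NormedAddCommGroup F] [NormedSpace ℝ F]

theorem image_closedBall_inter_subset_vadd_smul_cthickening {f : E → F} {L : E →L[ℝ] F}
    {s : Set E} {x : E} {ε r : ℝ} (hε : 0 ≤ ε) (hr : 0 < r)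
    (hf : ∀ y ∈ closedBall x r ∩ s, ‖f y - f x - L (y - x)‖ ≤ ε * ‖y - x‖) :
    f '' (closedBall x r ∩ s) ⊆ f x +ᵥ r • cthickening ε (L '' closedBall 0 1) := by
  rintro _ ⟨y, hy, rfl⟩
  have hyx : ‖y - x‖ ≤ r := by simpa [dist_eq_norm] using mem_closedBall.1 hy.1
  rw [mem_vadd_set_iff_neg_vadd_mem, vadd_eq_add, neg_add_eq_sub,
    mem_smul_set_iff_inv_smul_mem₀ hr.ne']
  refine mem_cthickening_of_dist_le _ (L (r⁻¹ • (y - x))) ε _ ⟨r⁻¹ • (y - x), ?_, rfl⟩ ?_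
  · rw [mem_closedBall_zero_iff, norm_smul, norm_inv, Real.norm_of_nonneg hr.le,
      inv_mul_le_iff₀ hr, mul_one]
    exact hyx
  · rw [dist_eq_norm, L.map_smul, ← smul_sub, norm_smul, norm_inv, Real.norm_of_nonneg hr.le,
      inv_mul_le_iff₀ hr]
    calc ‖f y - f x - L (y - x)‖ ≤ ε * ‖y - x‖ := hf y hy
      _ ≤ ε * r := by gcongr
      _ = r * ε := mul_comm _ _

end

namespace MeasureTheory.Measure

variable {E : Type*} [NormedAddCommGroup E] [NormedSpace ℝ E] [MeasurableSpace E] [BorelSpace E]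
  [FiniteDimensional ℝ E] (μ : Measure E) [μ.IsAddHaarMeasure]

theorem addHaar_vadd_smul_div_addHaar_closedBall (a x : E) {r : ℝ} (hr : 0 < r) (A : Set E) :
    μ (a +ᵥ r • A) / μ (closedBall x r) = μ A / μ (closedBall 0 1) := by
  rw [measure_vadd, addHaar_smul_of_nonneg μ hr.le, addHaar_closedBall' μ x hr.le,
    ENNReal.mul_div_mul_left _ _ (ENNReal.ofReal_pos.2 (pow_pos hr _)).ne' ENNReal.ofReal_ne_top]

theorem addHaar_image_eq_zero_of_det_eq_zero {L : E →L[ℝ] E} (hL : L.det = 0) (s : Set E) :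
    μ (L '' s) = 0 := by
  rw [addHaar_image_continuousLinearMap, ← ContinuousLinearMap.det, hL, abs_zero,
    ENNReal.ofReal_zero, zero_mul]

theorem tendsto_addHaar_image_closedBall_inter_div_of_det_eq_zero {f : E → E}
    {L : E →L[ℝ] E} {s : Set E} {x : E} (hfL : HasFDerivWithinAt f L s x) (hL : L.det = 0) :
    Tendsto (fun r : ℝ => μ (f '' (closedBall x r ∩ s)) / μ (closedBall x r))
      (𝓝[>] 0) (𝓝 0) := by
  set K := L '' closedBall (0 : E) 1
  have hball : μ (closedBall (0 : E) 1) ≠ 0 := (measure_closedBall_pos μ _ one_pos).ne'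
  have hthick : Tendsto (fun ε => μ (cthickening ε K) / μ (closedBall 0 1)) (𝓝 0) (𝓝 0) := by
    have hK : IsCompact K := (isCompact_closedBall _ _).image L.continuous
    have := ENNReal.Tendsto.div_const (tendsto_measure_cthickening_of_isCompact (μ := μ) hK)
      (Or.inr hball)
    rwa [addHaar_image_eq_zero_of_det_eq_zero μ hL, ENNReal.zero_div] at this
  rw [ENNReal.tendsto_nhds_zero]
  intro η hη
  have hsmall := (hthick.eventually_le_const hη).filter_mono (nhdsWithin_le_nhds (s := Ioi 0))
  obtain ⟨ε, hεη, hε⟩ := (hsmall.and self_mem_nhdsWithin).exists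
  obtain ⟨δ, hδ, hfδ⟩ := Metric.mem_nhdsWithin_iff.1 (hfL.isLittleO.def hε)
  filter_upwards [Ioo_mem_nhdsGT hδ] with r ⟨hr, hrδ⟩
  have hsub := image_closedBall_inter_subset_vadd_smul_cthickening (f := f) (L := L) hε.le hr
    fun y hy => hfδ ⟨(mem_closedBall.1 hy.1).trans_lt hrδ, hy.2⟩
  calc μ (f '' (closedBall x r ∩ s)) / μ (closedBall x r)
      ≤ μ (f x +ᵥ r • cthickening ε K) / μ (closedBall x r) := by gcongr
    _ = μ (cthickening ε K) / μ (closedBall 0 1) :=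
      addHaar_vadd_smul_div_addHaar_closedBall μ _ _ hr _
    _ ≤ η := hεη

end MeasureTheory.Measure

theorem stmt3_general (d : ℕ) (H : Set (EuclideanSpace ℝ (Fin d)))
    (f : EuclideanSpace ℝ (Fin d) → EuclideanSpace ℝ (Fin d))
    (hdiff : ∀ᵐ x ∂(volume.restrict H),
      ∃ L : EuclideanSpace ℝ (Fin d) →L[ℝ] EuclideanSpace ℝ (Fin d),
        HasFDerivWithinAt f L H x ∧ L.det = 0) :
    ∀ᵐ x ∂(volume.restrict H),
      Tendsto (fun r : ℝ =>
          volume (f '' (closedBall x r ∩ H)) / volume (closedBall x r))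
        (𝓝[>] 0) (𝓝 0) := by
  filter_upwards [hdiff] with x ⟨L, hfL, hL⟩
  exact Measure.tendsto_addHaar_image_closedBall_inter_div_of_det_eq_zero volume hfL hL

/-- If a Borel map `f` on a Borel set `H ⊆ ℝ^d` is differentiable (within `H`)
at almost every point of `H` with singular derivative, then for almost every
`x ∈ H` the ratio `λ(f(B(x,r) ∩ H)) / λ(B(x,r))` tends to `0` as `r → 0⁺`. -/
theorem stmt3 (d : ℕ) (H : Set (EuclideanSpace ℝ (Fin d))) (hH : MeasurableSet H)
    (f : EuclideanSpace ℝ (Fin d) → EuclideanSpace ℝ (Fin d)) (hf : Measurable f)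
    (hdiff : ∀ᵐ x ∂(volume.restrict H),
      ∃ L : EuclideanSpace ℝ (Fin d) →L[ℝ] EuclideanSpace ℝ (Fin d),
        HasFDerivWithinAt f L H x ∧ L.det = 0) :
    ∀ᵐ x ∂(volume.restrict H),
      Tendsto (fun r : ℝ =>
          volume (f '' (closedBall x r ∩ H)) / volume (closedBall x r))
        (𝓝[>] 0) (𝓝 0) :=
  stmt3_general d H f hdiff
end

section
/- Let H ⊆ ℝ^d be a Borel set and f : H → ℝ^d be Borel measurable. If lim_{r→0⁺} λ^d(f(B(x,r) ∩ H)) / λ^d(B(x,r)) = 0 for almost every x ∈ H, then there exists a Borel set F ⊆ H with λ^d(H ∖ F) = 0 and λ^d(f(F)) = 0 (i.e., f is singular). -/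
open MeasureTheory Metric Set Filter Topology
open scoped ENNReal

/-! At a point where the ratio tends to `0`, every small ball `B` satisfies
`λ(f(B ∩ H)) ≤ ε λ(B)`. By the Besicovitch covering theorem such balls, centred at the points of
`F ∩ U` for an open `U` of finite measure, can be sorted into `N` families of disjoint balls
inside `U` covering `F ∩ U`, whence `λ(f(F ∩ U)) ≤ N ε λ(U)` for every `ε > 0`. The
argument works for any outer measure in place of `A ↦ λ(f(A ∩ H))`. -/

namespace MeasureTheory.OuterMeasure

variable {α : Type*} [MeasurableSpace α] (ρ : OuterMeasure α) (μ : Measure α)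

theorem biUnion_le_mul_of_pairwiseDisjoint {ι : Type*} {t : Set ι} (ht : t.Countable)
    {B : ι → Set α} (hB : t.PairwiseDisjoint B) (hBm : ∀ i ∈ t, MeasurableSet (B i))
    {U : Set α} (hBU : ∀ i ∈ t, B i ⊆ U) {ε : ℝ≥0∞} (hρ : ∀ i ∈ t, ρ (B i) ≤ ε * μ (B i)) :
    ρ (⋃ i ∈ t, B i) ≤ ε * μ U :=
  calc ρ (⋃ i ∈ t, B i) ≤ ∑' i : t, ρ (B i) := measure_biUnion_le ρ ht B
    _ ≤ ∑' i : t, ε * μ (B i) := ENNReal.tsum_le_tsum fun i => hρ i i.2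
    _ = ε * μ (⋃ i ∈ t, B i) := by rw [ENNReal.tsum_mul_left, measure_biUnion ht hB hBm]
    _ ≤ ε * μ U := by gcongr; exact iUnion₂_subset hBU

variable [MetricSpace α] [SecondCountableTopology α] [OpensMeasurableSpace α]

theorem le_mul_of_frequently_le_mul_closedBall {N : ℕ} {τ : ℝ} (hτ : 1 < τ)
    (hN : IsEmpty (Besicovitch.SatelliteConfig α N τ)) {S U : Set α} (hU : IsOpen U)
    (hSU : S ⊆ U) {ε : ℝ≥0∞}
    (hρ : ∀ x ∈ S, ∃ᶠ r in 𝓝[>] 0, ρ (closedBall x r) ≤ ε * μ (closedBall x r)) :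
    ρ S ≤ N * (ε * μ U) := by
  have hrad : ∀ x : S, ∃ r ∈ Ioo (0 : ℝ) 1, closedBall (x : α) r ⊆ U ∧
      ρ (closedBall (x : α) r) ≤ ε * μ (closedBall (x : α) r) := by
    rintro ⟨x, hx⟩
    have hsmall : ∀ᶠ r in 𝓝[>] (0 : ℝ), r ∈ Ioo (0 : ℝ) 1 ∧ closedBall x r ⊆ U :=
      Eventually.and (Ioo_mem_nhdsGT one_pos)
        (nhdsWithin_le_nhds (eventually_closedBall_subset (hU.mem_nhds (hSU hx))))
    obtain ⟨r, hrρ, hr_mem, hr_sub⟩ := ((hρ x hx).and_eventually hsmall).exists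
    exact ⟨r, hr_mem, hr_sub, hrρ⟩
  choose rad hrad_mem hrad_sub hrad_le using hrad
  let q : Besicovitch.BallPackage S α :=
    { c := Subtype.val, r := rad, rpos := fun x => (hrad_mem x).1, r_bound := 1,
      r_le := fun x => (hrad_mem x).2.le }
  obtain ⟨s, hs_disj, hs_cover⟩ := Besicovitch.exist_disjoint_covering_families hτ hN q
  have hS : S ⊆ ⋃ i : Fin N, ⋃ j ∈ s i, closedBall (j : α) (rad j) := fun x hx => by
    have := hs_cover ⟨⟨x, hx⟩, rfl⟩
    simp only [mem_iUnion] at this ⊢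
    obtain ⟨i, j, hj, hxj⟩ := this
    exact ⟨i, j, hj, ball_subset_closedBall hxj⟩
  have hfamily (i : Fin N) : ρ (⋃ j ∈ s i, closedBall (j : α) (rad j)) ≤ ε * μ U := by
    have hcount : (s i).Countable := (hs_disj i).countable_of_nonempty_interior fun j _ =>
      (nonempty_ball.2 (hrad_mem j).1).mono ball_subset_interior_closedBall
    exact biUnion_le_mul_of_pairwiseDisjoint ρ μ hcount (hs_disj i)
      (fun _ _ => measurableSet_closedBall) (fun j _ => hrad_sub j) fun j _ => hrad_le j
  calc ρ S ≤ ∑ i : Fin N, ρ (⋃ j ∈ s i, closedBall (j : α) (rad j)) :=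
        (measure_mono hS).trans (measure_iUnion_fintype_le ρ _)
    _ ≤ ∑ _i : Fin N, ε * μ U := Finset.sum_le_sum fun i _ => hfamily i
    _ = N * (ε * μ U) := by simp

theorem eq_zero_of_tendsto_div_measure_closedBall [HasBesicovitchCovering α]
    [IsLocallyFiniteMeasure μ] {S : Set α}
    (hρ : ∀ x ∈ S, Tendsto (fun r => ρ (closedBall x r) / μ (closedBall x r)) (𝓝[>] 0) (𝓝 0)) :
    ρ S = 0 := by
  obtain ⟨N, τ, hτ, hN⟩ := HasBesicovitchCovering.no_satelliteConfig (α := α)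
  have hbound {ε : ℝ≥0∞} (hε : ε ∈ Ioo 0 ∞) {U : Set α} (hU : IsOpen U) :
      ρ (S ∩ U) ≤ N * (ε * μ U) := by
    refine le_mul_of_frequently_le_mul_closedBall ρ μ hτ hN hU inter_subset_right
      fun x hx => Eventually.frequently ?_
    filter_upwards [(hρ x hx.1).eventually_le_const hε.1] with r hr
    exact (ENNReal.div_le_iff_le_mul (Or.inr hε.2.ne) (Or.inr hε.1.ne')).1 hr
  have hnull {U : Set α} (hU : IsOpen U) (hμU : μ U ≠ ∞) : ρ (S ∩ U) = 0 := by
    have hlim : Tendsto (fun ε => N * (ε * μ U)) (𝓝[>] 0) (𝓝 0) := by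
      have := ENNReal.Tendsto.const_mul (ENNReal.Tendsto.mul_const (tendsto_id (x := 𝓝 0))
        (Or.inr hμU)) (Or.inr (ENNReal.natCast_ne_top N))
      simpa using this.mono_left nhdsWithin_le_nhds
    refine le_antisymm (ge_of_tendsto hlim ?_) zero_le
    filter_upwards [Ioo_mem_nhdsGT ENNReal.zero_lt_top] with ε hε using hbound hε hU
  let V := μ.finiteSpanningSetsInOpen'
  rw [← inter_univ S, ← V.spanning, inter_iUnion]
  exact measure_iUnion_null fun n => hnull (V.set_mem n) (V.finite n).ne

end MeasureTheory.OuterMeasure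

theorem stmt4_general (d : ℕ) (H : Set (EuclideanSpace ℝ (Fin d))) (hH : MeasurableSet H)
    (f : EuclideanSpace ℝ (Fin d) → EuclideanSpace ℝ (Fin d))
    (hlim : ∀ᵐ x ∂(volume.restrict H),
      Tendsto (fun r : ℝ =>
          volume (f '' (closedBall x r ∩ H)) / volume (closedBall x r))
        (𝓝[>] 0) (𝓝 0)) :
    ∃ F : Set (EuclideanSpace ℝ (Fin d)), MeasurableSet F ∧ F ⊆ H ∧
      volume (H \ F) = 0 ∧ volume (f '' F) = 0 := by
  obtain ⟨s, hs_ae, hs_meas, hs⟩ := hlim.exists_measurable_mem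
  refine ⟨H ∩ s, hH.inter hs_meas, inter_subset_left, ?_, ?_⟩
  · rw [sdiff_self_inter, sdiff_eq, inter_comm, ← Measure.restrict_apply hs_meas.compl]
    exact mem_ae_iff.1 hs_ae
  · let ρ := OuterMeasure.restrict H (OuterMeasure.comap f volume.toOuterMeasure)
    have hρ : ρ (H ∩ s) = volume (f '' (H ∩ s)) := by
      simp [ρ, OuterMeasure.restrict_apply, OuterMeasure.comap_apply,
        inter_eq_left.2 inter_subset_left]
    rw [← hρ]
    refine ρ.eq_zero_of_tendsto_div_measure_closedBall volume fun x hx => ?_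
    simpa [ρ, OuterMeasure.restrict_apply, OuterMeasure.comap_apply] using hs x hx.2

/-- If for almost every `x ∈ H` the ratio `λ(f(B(x,r) ∩ H)) / λ(B(x,r))` tends
to `0` as `r → 0⁺`, then `f` is singular: there is a Borel set `F ⊆ H` of full
measure in `H` whose image is Lebesgue null. -/
theorem stmt4 (d : ℕ) (H : Set (EuclideanSpace ℝ (Fin d))) (hH : MeasurableSet H)
    (f : EuclideanSpace ℝ (Fin d) → EuclideanSpace ℝ (Fin d)) (hf : Measurable f)
    (hlim : ∀ᵐ x ∂(volume.restrict H),
      Tendsto (fun r : ℝ =>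
          volume (f '' (closedBall x r ∩ H)) / volume (closedBall x r))
        (𝓝[>] 0) (𝓝 0)) :
    ∃ F : Set (EuclideanSpace ℝ (Fin d)), MeasurableSet F ∧ F ⊆ H ∧
      volume (H \ F) = 0 ∧ volume (f '' F) = 0 :=
  stmt4_general d H hH f hlim
end

section
/- Let H ⊆ ℝ^d be a Borel set and f : H → ℝ^d a Borel measurable map that is differentiable at almost every point of H. If there exists a Borel set F ⊆ H with λ^d(H ∖ F) = 0 and λ^d(f(F)) = 0, then for almost every x ∈ H, f is differentiable at x with det f'(x) = 0. -/
open MeasureTheory Set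

open scoped NNReal

/-!
Cover the set `B` of points of `F` where the derivative is invertible by countably many pieces
on each of which `f` is so close to a fixed invertible linear map `A` that it multiplies the
Haar measure of every subset by at least `|det A| / 2` (in particular `f⁻¹` is Lipschitz there).
Since `f '' B ⊆ f '' F` is null, every piece, and hence `B`, is null. Almost every point of `H`
lies in `F \ B`, where the derivative within `H` is singular.
-/

namespace MeasureTheory

variable {E : Type*} [NormedAddCommGroup E] [NormedSpace ℝ E] [FiniteDimensional ℝ E]
  [MeasurableSpace E] [BorelSpace E] (μ : Measure E) [μ.IsAddHaarMeasure]

-- `δ` is positive even when `det A = 0`, so that it can serve as the radius function of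
-- `exists_partition_approximatesLinearOn_of_hasFDerivWithinAt`.
theorem exists_pos_addHaar_eq_zero_of_approximatesLinearOn_of_image (A : E →L[ℝ] E) :
    ∃ δ : ℝ≥0, 0 < δ ∧ (A.det ≠ 0 → ∀ (s : Set E) (f : E → E),
      ApproximatesLinearOn f A s δ → μ (f '' s) = 0 → μ s = 0) := by
  rcases eq_or_ne A.det 0 with hA | hA
  · exact ⟨1, one_pos, fun h => (h hA).elim⟩
  have hdet : 0 < |A.det| := abs_pos.2 hA
  have hm : ENNReal.ofReal (|A.det| / 2) < ENNReal.ofReal |A.det| :=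
    (ENNReal.ofReal_lt_ofReal_iff hdet).2 (half_lt_self hdet)
  obtain ⟨δ, hδ, hδpos⟩ :=
    ((mul_le_addHaar_image_of_lt_det μ A hm).and self_mem_nhdsWithin).exists
  refine ⟨δ, hδpos, fun _ s f hf himg => ?_⟩
  have hmul := hδ s f hf
  rw [himg, nonpos_iff_eq_zero, mul_eq_zero] at hmul
  exact hmul.resolve_left (ENNReal.ofReal_ne_zero_iff.2 (half_pos hdet))

theorem addHaar_eq_zero_of_hasFDerivWithinAt_of_det_ne_zero {f : E → E} {s : Set E}
    {f' : E → E →L[ℝ] E} (hf' : ∀ x ∈ s, HasFDerivWithinAt f (f' x) s x)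
    (hdet : ∀ x ∈ s, (f' x).det ≠ 0) (himg : μ (f '' s) = 0) : μ s = 0 := by
  rcases s.eq_empty_or_nonempty with rfl | hs
  · exact measure_empty
  choose δ hδpos hδ using exists_pos_addHaar_eq_zero_of_approximatesLinearOn_of_image μ
  obtain ⟨t, A, -, -, hst, hfA, hA⟩ :=
    exists_partition_approximatesLinearOn_of_hasFDerivWithinAt f s f' hf' δ
      fun A => (hδpos A).ne'
  have hpiece : ∀ n, μ (s ∩ t n) = 0 := fun n => by
    obtain ⟨y, hy, hAy⟩ := hA hs n
    exact hδ _ (hAy ▸ hdet y hy) _ f (hfA n)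
      (measure_mono_null (image_mono inter_subset_left) himg)
  exact measure_mono_null ((subset_inter subset_rfl hst).trans (inter_iUnion s t).subset)
    (measure_iUnion_null hpiece)

end MeasureTheory

theorem stmt6_general (d : ℕ) (H : Set (EuclideanSpace ℝ (Fin d)))
    (f : EuclideanSpace ℝ (Fin d) → EuclideanSpace ℝ (Fin d))
    (hdiff : ∀ᵐ x ∂(volume.restrict H),
      ∃ L : EuclideanSpace ℝ (Fin d) →L[ℝ] EuclideanSpace ℝ (Fin d),
        HasFDerivWithinAt f L H x)
    (F : Set (EuclideanSpace ℝ (Fin d))) (hFmeas : MeasurableSet F) (hFH : F ⊆ H)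
    (hF1 : volume (H \ F) = 0) (hF0 : volume (f '' F) = 0) :
    ∀ᵐ x ∂(volume.restrict H),
      ∃ L : EuclideanSpace ℝ (Fin d) →L[ℝ] EuclideanSpace ℝ (Fin d),
        HasFDerivWithinAt f L H x ∧ L.det = 0 := by
  set B := {x ∈ F | DifferentiableWithinAt ℝ f H x ∧ (fderivWithin ℝ f H x).det ≠ 0}
  have hB : volume B = 0 :=
    addHaar_eq_zero_of_hasFDerivWithinAt_of_det_ne_zero volume
      (fun x hx => hx.2.1.hasFDerivWithinAt.mono fun _ hy => hFH hy.1)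
      (fun x hx => hx.2.2) (measure_mono_null (image_mono fun _ hx => hx.1) hF0)
  have hF : ∀ᵐ x ∂(volume.restrict H), x ∈ F := by
    rw [ae_iff, ← compl_def, Measure.restrict_apply hFmeas.compl, ← sdiff_eq_compl_inter]
    exact hF1
  filter_upwards [hdiff, hF, ae_restrict_of_ae (measure_eq_zero_iff_ae_notMem.1 hB)]
    with x ⟨L, hL⟩ hxF hxB
  refine ⟨fderivWithin ℝ f H x, hL.differentiableWithinAt.hasFDerivWithinAt, ?_⟩
  by_contra hdet
  exact hxB ⟨hxF, hL.differentiableWithinAt, hdet⟩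

/-- If a Borel map `f` on a Borel set `H ⊆ ℝ^d` is differentiable within `H` at
almost every point of `H`, and there is a Borel set `F ⊆ H` of full measure in
`H` with `λ(f(F)) = 0`, then at almost every `x ∈ H` the map `f` is
differentiable with singular derivative. -/
theorem stmt6 (d : ℕ) (H : Set (EuclideanSpace ℝ (Fin d))) (hH : MeasurableSet H)
    (f : EuclideanSpace ℝ (Fin d) → EuclideanSpace ℝ (Fin d)) (hf : Measurable f)
    (hdiff : ∀ᵐ x ∂(volume.restrict H),
      ∃ L : EuclideanSpace ℝ (Fin d) →L[ℝ] EuclideanSpace ℝ (Fin d),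
        HasFDerivWithinAt f L H x)
    (F : Set (EuclideanSpace ℝ (Fin d))) (hFmeas : MeasurableSet F) (hFH : F ⊆ H)
    (hF1 : volume (H \ F) = 0) (hF0 : volume (f '' F) = 0) :
    ∀ᵐ x ∂(volume.restrict H),
      ∃ L : EuclideanSpace ℝ (Fin d) →L[ℝ] EuclideanSpace ℝ (Fin d),
        HasFDerivWithinAt f L H x ∧ L.det = 0 :=
  stmt6_general d H f hdiff F hFmeas hFH hF1 hF0
end

section
/- Let f : [0,1] → [0,1] be an increasing homeomorphism. If the length of the graph of f equals 2, then f is differentiable with derivative 0 at almost every point of [0,1]. -/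
/-!
A chord of the graph over an interval with run `Δx` and rise `Δy` has length
`√(Δx² + Δy²) ≤ Δx + Δy - min Δx Δy / 2`, and `min Δx Δy ≥ ∫ min f' 1` over that interval,
since a monotone function rises at least by the integral of its derivative. Summing over a
partition of `[0, 1]`, every inscribed polygon has length at most `2 - (∫₀¹ min f' 1) / 2`, so
length `2` forces `min f' 1 = 0`, that is `f' = 0`, almost everywhere.
-/

open MeasureTheory Set Filter

theorem Real.sqrt_sq_add_sq_le_add_sub_half {A B M : ℝ} (hA : 0 ≤ A) (hB : 0 ≤ B)
    (hMA : M ≤ A) (hMB : M ≤ B) : √(A ^ 2 + B ^ 2) ≤ A + B - M / 2 :=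
  Real.sqrt_le_iff.mpr ⟨by linarith,
    by nlinarith [mul_nonneg hA (sub_nonneg.2 hMB), mul_nonneg hB (sub_nonneg.2 hMA)]⟩

theorem Fin.sum_cocycle {α M : Type*} [AddCommGroup M] (F : α → α → M)
    (hF : ∀ x y z, F x y + F y z = F x z) {k : ℕ} (a : Fin (k + 1) → α) :
    ∑ i : Fin k, F (a i.castSucc) (a i.succ) = F (a 0) (a (Fin.last k)) := by
  induction k with
  | zero => simpa [eq_comm] using hF (a 0) (a 0) (a 0)
  | succ k ih =>
    rw [Fin.sum_univ_castSucc]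
    simp only [Fin.succ_castSucc]
    rw [ih (fun i => a i.castSucc)]
    simpa using hF _ _ _

theorem Monotone.intervalIntegrable_min_deriv_one {g : ℝ → ℝ} (hg : Monotone g) (x y : ℝ) :
    IntervalIntegrable (fun t => min (deriv g t) 1) volume x y := by
  have h := (hg.monotoneOn (uIcc x y)).intervalIntegrable_deriv
  exact ⟨h.1.inf (integrableOn_const (by simp)), h.2.inf (integrableOn_const (by simp))⟩

theorem Monotone.integral_min_deriv_one_le {g : ℝ → ℝ} (hg : Monotone g) {x y : ℝ} (hxy : x ≤ y) :
    ∫ t in x..y, min (deriv g t) 1 ≤ min (y - x) (g y - g x) := by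
  have hint := hg.intervalIntegrable_min_deriv_one x y
  refine le_min ?_ ?_
  · calc ∫ t in x..y, min (deriv g t) 1 ≤ ∫ _ in x..y, (1 : ℝ) :=
          intervalIntegral.integral_mono_on hxy hint intervalIntegrable_const
            fun t _ => min_le_right _ _
      _ = y - x := by simp
  · have hderiv := (hg.monotoneOn (uIcc x y)).intervalIntegral_deriv_mem_uIcc
    rw [uIcc_of_le (sub_nonneg.2 (hg hxy))] at hderiv
    calc ∫ t in x..y, min (deriv g t) 1 ≤ ∫ t in x..y, deriv g t :=
          intervalIntegral.integral_mono_on hxy hint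
            (hg.monotoneOn (uIcc x y)).intervalIntegrable_deriv fun t _ => min_le_left _ _
      _ ≤ g y - g x := hderiv.2

theorem Monotone.sum_sqrt_le_sub_integral_min_deriv_one {g : ℝ → ℝ} (hg : Monotone g) {k : ℕ}
    {a : Fin (k + 1) → ℝ} (ha : Monotone a) :
    ∑ i : Fin k, √((a i.succ - a i.castSucc) ^ 2 + (g (a i.succ) - g (a i.castSucc)) ^ 2) ≤
      a (Fin.last k) - a 0 + (g (a (Fin.last k)) - g (a 0)) -
        (∫ t in a 0..a (Fin.last k), min (deriv g t) 1) / 2 := by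
  have hterm (i : Fin k) :
      √((a i.succ - a i.castSucc) ^ 2 + (g (a i.succ) - g (a i.castSucc)) ^ 2) ≤
        a i.succ - a i.castSucc + (g (a i.succ) - g (a i.castSucc)) -
          (∫ t in a i.castSucc..a i.succ, min (deriv g t) 1) / 2 := by
    have hle := ha (Fin.castSucc_le_succ i)
    have h := hg.integral_min_deriv_one_le hle
    exact Real.sqrt_sq_add_sq_le_add_sub_half (sub_nonneg.2 hle) (sub_nonneg.2 (hg hle))
      (h.trans (min_le_left _ _)) (h.trans (min_le_right _ _))
  have hx := Fin.sum_cocycle (fun x y : ℝ => y - x) (fun _ _ _ => by ring) a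
  have hy := Fin.sum_cocycle (fun x y : ℝ => g y - g x) (fun _ _ _ => by ring) a
  have hI := Fin.sum_cocycle (fun x y : ℝ => ∫ t in x..y, min (deriv g t) 1)
    (fun x y z => intervalIntegral.integral_add_adjacent_intervals
      (hg.intervalIntegrable_min_deriv_one x y) (hg.intervalIntegrable_min_deriv_one y z)) a
  beta_reduce at hx hy hI
  calc _ ≤ _ := Finset.sum_le_sum fun i _ => hterm i
    _ = _ := by rw [Finset.sum_sub_distrib, Finset.sum_add_distrib, ← Finset.sum_div, hx, hy, hI]

theorem Monotone.ae_hasDerivAt_zero_of_integral_min_deriv_one_nonpos {g : ℝ → ℝ}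
    (hg : Monotone g) {a b : ℝ} (hab : a ≤ b) (hI : ∫ t in a..b, min (deriv g t) 1 ≤ 0) :
    ∀ᵐ x ∂volume.restrict (Icc a b), HasDerivAt g 0 x := by
  have hpos (t : ℝ) : 0 ≤ min (deriv g t) 1 := le_min hg.deriv_nonneg zero_le_one
  have hnonneg : 0 ≤ᵐ[volume.restrict (Ioc a b)] fun t => min (deriv g t) 1 :=
    Eventually.of_forall hpos
  have hzero := (intervalIntegral.integral_eq_zero_iff_of_le_of_nonneg_ae hab hnonneg
    (hg.intervalIntegrable_min_deriv_one a b)).1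
    (le_antisymm hI (intervalIntegral.integral_nonneg hab fun t _ => hpos t))
  rw [← Measure.restrict_congr_set Ioc_ae_eq_Icc]
  filter_upwards [hzero, ae_restrict_of_ae hg.ae_differentiableAt] with x hx hdiff
  have hderiv : deriv g x = 0 := ((min_eq_iff.1 hx).resolve_right fun h => one_ne_zero h.1).1
  exact hderiv ▸ hdiff.hasDerivAt

theorem stmt7_general (f : ℝ → ℝ)
    (hm : StrictMonoOn f (Icc 0 1)) (h0 : f 0 = 0) (h1 : f 1 = 1)
    (hlen : sSup {s : ℝ | ∃ (k : ℕ) (a : Fin (k + 1) → ℝ), StrictMono a ∧ a 0 = 0 ∧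
        a (Fin.last k) = 1 ∧
        s = ∑ i : Fin k, Real.sqrt ((a i.succ - a i.castSucc) ^ 2 +
          (f (a i.succ) - f (a i.castSucc)) ^ 2)} = 2) :
    ∀ᵐ x ∂(volume.restrict (Icc (0 : ℝ) 1)),
      HasDerivWithinAt f 0 (Icc (0 : ℝ) 1) x := by
  set g := IccExtend zero_le_one ((Icc 0 1).domRestrict f)
  have hg : Monotone g := hm.domRestrict.monotone.IccExtend _
  have hgf : EqOn g f (Icc 0 1) := fun x hx => IccExtend_of_mem _ _ hx
  have hg0 : g 0 = 0 := (hgf (left_mem_Icc.2 zero_le_one)).trans h0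
  have hg1 : g 1 = 1 := (hgf (right_mem_Icc.2 zero_le_one)).trans h1
  set I := ∫ t in (0 : ℝ)..1, min (deriv g t) 1
  have hI1 : I ≤ 1 := by
    simpa using (hg.integral_min_deriv_one_le zero_le_one).trans (min_le_left _ _)
  have hI0 : I ≤ 0 := by
    suffices (2 : ℝ) ≤ 2 - I / 2 by linarith
    calc (2 : ℝ) = sSup _ := hlen.symm
      _ ≤ 2 - I / 2 := by
        refine Real.sSup_le ?_ (by linarith)
        rintro s ⟨k, a, ha, ha0, ha1, rfl⟩
        have hmem (i : Fin (k + 1)) : a i ∈ Icc 0 1 :=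
          ⟨ha0 ▸ ha.monotone (Fin.zero_le i), ha1 ▸ ha.monotone (Fin.le_last i)⟩
        have h := hg.sum_sqrt_le_sub_integral_min_deriv_one ha.monotone
        simp only [hgf (hmem _), ha0, ha1, hg0, hg1] at h
        linarith
  filter_upwards [hg.ae_hasDerivAt_zero_of_integral_min_deriv_one_nonpos zero_le_one hI0,
    ae_restrict_mem measurableSet_Icc] with x hx hxI
  exact hx.hasDerivWithinAt.congr_of_mem (fun y hy => (hgf hy).symm) hxI

/-- If the length of the graph of an increasing homeomorphism `f` of `[0,1]`
(the supremum of inscribed polygonal lengths) equals `2`, then `f` has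
derivative `0` at almost every point of `[0,1]`. -/
theorem stmt7 (f : ℝ → ℝ) (hc : ContinuousOn f (Icc 0 1))
    (hm : StrictMonoOn f (Icc 0 1)) (h0 : f 0 = 0) (h1 : f 1 = 1)
    (hlen : sSup {s : ℝ | ∃ (k : ℕ) (a : Fin (k + 1) → ℝ), StrictMono a ∧ a 0 = 0 ∧
        a (Fin.last k) = 1 ∧
        s = ∑ i : Fin k, Real.sqrt ((a i.succ - a i.castSucc) ^ 2 +
          (f (a i.succ) - f (a i.castSucc)) ^ 2)} = 2) :
    ∀ᵐ x ∂(volume.restrict (Icc (0 : ℝ) 1)),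
      HasDerivWithinAt f 0 (Icc (0 : ℝ) 1) x :=
  stmt7_general f hm h0 h1 hlen
end

section
/- For every d ≥ 1, the generic continuous map f ∈ C([0,1]^d, ℝ^d) (in the sense of Baire category, with the uniform metric) satisfies: there is an F_σ set F ⊆ [0,1]^d with λ^d(F) = 1 such that λ^d(f(F)) = 0. That is, the set of f admitting such an F is comeager. -/
/-
Choose dense open sets `U₀ ⊇ U₁ ⊇ ⋯` in `ℝ` with Lebesgue-null intersection, and let `F k` be
the points of the cube none of whose coordinates lie in `U k`. These sets are closed, exhaust
the cube up to a null set, and are totally disconnected since every coordinate avoids a dense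
set. On a compact totally disconnected set a continuous map is uniformly close to a locally
constant one, and by Tietze the correction extends to the cube with the same bound; so the maps
sending `F k` onto a finite set are dense. By outer regularity `{f | λ(f(F k)) < ε}` is open,
hence the maps with `λ(f(F k)) = 0` form a dense `G_δ`, and we intersect over `k`.
-/

open MeasureTheory Metric Set Filter Topology

/-- The unit cube `[0,1]^d` in Euclidean space. -/
def cube (d : ℕ) : Set (EuclideanSpace ℝ (Fin d)) := {x | ∀ i, x i ∈ Icc (0 : ℝ) 1}

open scoped ENNReal

theorem ENNReal.eq_zero_iff_forall_lt_inv_natCast {x : ℝ≥0∞} :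
    x = 0 ↔ ∀ n : ℕ, x < (n : ℝ≥0∞)⁻¹ := by
  refine ⟨fun hx n => by simp [hx], fun hx => ?_⟩
  exact nonpos_iff_eq_zero.1 (ge_of_tendsto' ENNReal.tendsto_inv_nat_nhds_zero fun n => (hx n).le)

theorem IsPreconnected.subsingleton_of_disjoint_dense {α : Type*} [TopologicalSpace α]
    [LinearOrder α] [OrderClosedTopology α] [DenselyOrdered α] {s D : Set α}
    (hs : IsPreconnected s) (hD : Dense D) (hsD : Disjoint s D) : s.Subsingleton := by
  intro a ha b hb
  by_contra hab
  wlog hlt : a < b generalizing a b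
  · exact this hb ha (Ne.symm hab) ((Ne.lt_or_gt hab).resolve_left hlt)
  obtain ⟨c, hcD, hac, hcb⟩ := hD.exists_between hlt
  exact hsD.notMem_of_mem_right hcD (hs.Icc_subset ha hb ⟨hac.le, hcb.le⟩)

theorem isTotallyDisconnected_setOf_forall_notMem {X ι α : Type*} [TopologicalSpace X]
    [TopologicalSpace α] [LinearOrder α] [OrderClosedTopology α] [DenselyOrdered α]
    {p : X → ι → α} (hp : Continuous p) (hinj : Function.Injective p) {D : Set α}
    (hD : Dense D) : IsTotallyDisconnected {x | ∀ i, p x i ∉ D} := by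
  intro t hts ht x hx y hy
  refine hinj (funext fun i => ?_)
  have hti : IsPreconnected ((p · i) '' t) :=
    ht.image _ ((continuous_apply i).comp hp).continuousOn
  refine hti.subsingleton_of_disjoint_dense hD (disjoint_left.2 ?_) (mem_image_of_mem _ hx)
    (mem_image_of_mem _ hy)
  rintro _ ⟨z, hz, rfl⟩
  exact hts hz i

theorem exists_antitone_isOpen_dense_measure_iInter_eq_zero {α : Type*} [TopologicalSpace α]
    [TopologicalSpace.SeparableSpace α] [MeasurableSpace α] (μ : Measure α) [μ.OuterRegular]
    [NullSingletonClass μ] :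
    ∃ U : ℕ → Set α, Antitone U ∧ (∀ k, IsOpen (U k)) ∧ (∀ k, Dense (U k)) ∧
      μ (⋂ k, U k) = 0 := by
  obtain ⟨D, hD_count, hD_dense⟩ := TopologicalSpace.exists_countable_dense α
  have hV : ∀ k : ℕ, ∃ V ⊇ D, IsOpen V ∧ μ V < (k : ℝ≥0∞)⁻¹ := fun k =>
    exists_isOpen_lt_of_lt D _ ((hD_count.measure_zero μ).trans_lt (by simp))
  choose V hDV hV_open hV_lt using hV
  refine ⟨fun k => ⋂ j ∈ Finset.range (k + 1), V j, fun k l hkl => ?_,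
    fun k => isOpen_biInter_finset fun j _ => hV_open j,
    fun k => hD_dense.mono (subset_iInter₂ fun j _ => hDV j), ?_⟩
  · exact biInter_subset_biInter_left (by simpa using hkl)
  · refine ENNReal.eq_zero_iff_forall_lt_inv_natCast.2 fun k => ?_
    calc μ (⋂ k, ⋂ j ∈ Finset.range (k + 1), V j) ≤ μ (V k) :=
          measure_mono ((iInter_subset _ k).trans (biInter_subset_of_mem (by simp)))
      _ < (k : ℝ≥0∞)⁻¹ := hV_lt k

section FunctionSpace

variable {X E : Type*} [TopologicalSpace X]

theorem ContinuousMap.isOpen_setOf_measure_image_lt [TopologicalSpace E] [MeasurableSpace E]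
    (μ : Measure E) [μ.OuterRegular] {K : Set X} (hK : IsCompact K) (a : ℝ≥0∞) :
    IsOpen {f : C(X, E) | μ (f '' K) < a} := by
  refine isOpen_iff_forall_mem_open.2 fun f hf => ?_
  obtain ⟨U, hfU, hU_open, hU_lt⟩ := exists_isOpen_lt_of_lt _ _ hf
  exact ⟨{g | MapsTo g K U}, fun g hg => (measure_mono hg.image_subset).trans_lt hU_lt,
    ContinuousMap.isOpen_setOfPred_mapsTo hK hU_open, image_subset_iff.1 hfU⟩

theorem ContinuousMap.isGδ_setOf_measure_image_eq_zero [TopologicalSpace E] [MeasurableSpace E]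
    (μ : Measure E) [μ.OuterRegular] {K : Set X} (hK : IsCompact K) :
    IsGδ {f : C(X, E) | μ (f '' K) = 0} := by
  simp_rw [ENNReal.eq_zero_iff_forall_lt_inv_natCast, ofPred_forall]
  exact IsGδ.iInter_of_isOpen fun n => isOpen_setOf_measure_image_lt μ hK _

variable [CompactSpace X] [T2Space X] [NormedAddCommGroup E] [NormedSpace ℝ E]
  [FiniteDimensional ℝ E]

theorem ContinuousMap.exists_dist_lt_finite_image {K : Set X} (hK : IsClosed K)
    (hK_td : IsTotallyDisconnected K) (g : C(X, E)) {ε : ℝ} (hε : 0 < ε) :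
    ∃ f : C(X, E), dist f g < ε ∧ (f '' K).Finite := by
  have : CompactSpace K := isCompact_iff_compactSpace.1 hK.isCompact
  have : TotallyDisconnectedSpace K := totallyDisconnectedSpace_subtype_iff.2 hK_td
  obtain ⟨n, σ, c, hσ, hc⟩ := (g.restrict K).exists_finite_approximation_of_mem_nhds_diagonal
    (nhdsSet_diagonal_le_uniformity (dist_mem_uniformity (half_pos hε)))
  let h : C(K, E) := ⟨fun x => c (σ x) - g x,
    (continuous_of_discreteTopology.comp hσ).sub (g.continuous.comp continuous_subtype_val)⟩
  have h_mem : ∀ x, h x ∈ closedBall (0 : E) (ε / 2) := fun x => by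
    have hx : dist (g x) (c (σ x)) < ε / 2 := hc x
    rw [dist_comm, dist_eq_norm] at hx
    exact mem_closedBall_zero_iff.2 hx.le
  have := Metric.instTietzeExtensionClosedBall ℝ (0 : E) (half_pos hε)
  obtain ⟨e, he_mem, he_eq⟩ := h.exists_forall_mem_restrict_eq hK h_mem
  refine ⟨g + e, ?_, (finite_range c).subset ?_⟩
  · refine ((ContinuousMap.dist_le (half_pos hε).le).2 fun x => ?_).trans_lt (half_lt_self hε)
    simpa [dist_eq_norm] using he_mem x
  · rintro _ ⟨x, hx, rfl⟩
    have hex : e x = c (σ ⟨x, hx⟩) - g x := congr($he_eq ⟨x, hx⟩)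
    exact ⟨σ ⟨x, hx⟩, by simp [hex]⟩

theorem ContinuousMap.residual_setOf_measure_image_eq_zero [MeasurableSpace E] (μ : Measure E)
    [μ.OuterRegular] [NullSingletonClass μ] {K : Set X} (hK : IsClosed K)
    (hK_td : IsTotallyDisconnected K) :
    {f : C(X, E) | μ (f '' K) = 0} ∈ residual C(X, E) := by
  refine residual_of_dense_Gδ (isGδ_setOf_measure_image_eq_zero μ hK.isCompact) ?_
  refine Metric.dense_iff.2 fun g ε hε => ?_
  obtain ⟨f, hfg, hf_fin⟩ := exists_dist_lt_finite_image hK hK_td g hε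
  exact ⟨f, mem_ball.2 hfg, hf_fin.measure_zero μ⟩

end FunctionSpace

theorem cube_eq_preimage_ofLp (d : ℕ) : cube d = WithLp.ofLp ⁻¹' Icc 0 1 := by
  ext x
  simp [cube, Pi.le_def, forall_and]

theorem isCompact_cube (d : ℕ) : IsCompact (cube d) := by
  rw [cube_eq_preimage_ofLp]
  exact (PiLp.homeomorph 2 _).isCompact_preimage.2 isCompact_Icc

theorem volume_cube (d : ℕ) : volume (cube d) = 1 := by
  rw [cube_eq_preimage_ofLp, (PiLp.volume_preserving_ofLp _).measure_preimage
    measurableSet_Icc.nullMeasurableSet, Real.volume_Icc_pi]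
  simp

theorem EuclideanSpace.volume_setOf_apply_mem_eq_zero {ι : Type*} [Fintype ι] (i : ι)
    {N : Set ℝ} (hN : volume N = 0) : volume {x : EuclideanSpace ℝ ι | x i ∈ N} = 0 :=
  (PiLp.volume_preserving_ofLp ι).quasiMeasurePreserving.preimage_null
    (Measure.pi_eval_preimage_null _ hN)

theorem cube_diff_iUnion_setOf_forall_notMem_subset (d : ℕ) {U : ℕ → Set ℝ} (hU : Antitone U) :
    cube d \ ⋃ k, {x : EuclideanSpace ℝ (Fin d) | ∀ i, x i ∉ U k} ⊆
      ⋃ i, {x | x i ∈ ⋂ k, U k} := by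
  rintro x ⟨-, hx⟩
  simp only [mem_iUnion, mem_ofPred_eq, mem_iInter, not_exists, not_forall, not_not] at hx ⊢
  by_contra! hx'
  -- a coordinate outside `U k` stays outside all later `U l`, so one `k` serves every coordinate
  have hx_eventually : ∀ᶠ k in atTop, ∀ i, x i ∉ U k := eventually_all.2 fun i =>
    let ⟨k, hk⟩ := hx' i
    eventually_atTop.2 ⟨k, fun l hl hxl => hk (hU hl hxl)⟩
  obtain ⟨k, hk⟩ := hx_eventually.exists
  obtain ⟨i, hi⟩ := hx k
  exact hk i hi

theorem volume_cube_inter_iUnion_setOf_forall_notMem (d : ℕ) {U : ℕ → Set ℝ} (hU : Antitone U)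
    (hU_null : volume (⋂ k, U k) = 0) :
    volume (cube d ∩ ⋃ k, {x : EuclideanSpace ℝ (Fin d) | ∀ i, x i ∉ U k}) = 1 := by
  refine le_antisymm (volume_cube d ▸ measure_mono inter_subset_left) ?_
  rw [← volume_cube d]
  refine measure_mono_ae (ae_le_set.2 ?_)
  rw [sdiff_self_inter]
  exact measure_mono_null (cube_diff_iUnion_setOf_forall_notMem_subset d hU)
    (measure_iUnion_null fun i => EuclideanSpace.volume_setOf_apply_mem_eq_zero i hU_null)

/-- For every `d ≥ 1`, the generic continuous map `f : [0,1]^d → ℝ^d` admits an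
`F_σ` set `F ⊆ [0,1]^d` of full Lebesgue measure whose image under `f` is
Lebesgue null; that is, the set of such `f` is comeager. -/
theorem stmt8 (d : ℕ) (hd : 1 ≤ d) :
    {f : C(↥(cube d), EuclideanSpace ℝ (Fin d)) |
      ∃ F : ℕ → Set ↥(cube d), (∀ n, IsClosed (F n)) ∧
        volume ((↑) '' (⋃ n, F n) : Set (EuclideanSpace ℝ (Fin d))) = 1 ∧
        volume (f '' (⋃ n, F n)) = 0} ∈
      residual C(↥(cube d), EuclideanSpace ℝ (Fin d)) := by
  have : NeZero d := ⟨by omega⟩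
  have : CompactSpace (cube d) := isCompact_iff_compactSpace.1 (isCompact_cube d)
  obtain ⟨U, hU_anti, hU_open, hU_dense, hU_null⟩ :=
    exists_antitone_isOpen_dense_measure_iInter_eq_zero (volume : Measure ℝ)
  let G : ℕ → Set (EuclideanSpace ℝ (Fin d)) := fun k => {x | ∀ i, x i ∉ U k}
  let F : ℕ → Set (cube d) := fun k => (↑) ⁻¹' G k
  have hp : Continuous fun x : cube d => WithLp.ofLp (x : EuclideanSpace ℝ (Fin d)) :=
    (PiLp.continuous_ofLp _ _).comp continuous_subtype_val
  have hF_closed : ∀ k, IsClosed (F k) := fun k => by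
    simp only [F, G, ofPred_forall, preimage_iInter]
    exact isClosed_iInter fun i => (hU_open k).isClosed_compl.preimage ((continuous_apply i).comp hp)
  have hF_td : ∀ k, IsTotallyDisconnected (F k) := fun k =>
    isTotallyDisconnected_setOf_forall_notMem hp
      ((WithLp.ofLp_injective 2).comp Subtype.val_injective) (hU_dense k)
  filter_upwards [countable_iInter_mem.2 fun k =>
    ContinuousMap.residual_setOf_measure_image_eq_zero volume (hF_closed k) (hF_td k)] with f hf
  refine ⟨F, hF_closed, ?_, ?_⟩
  · rw [← preimage_iUnion, Subtype.image_preimage_coe]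
    exact volume_cube_inter_iUnion_setOf_forall_notMem d hU_anti hU_null
  · rw [image_iUnion]
    exact measure_iUnion_null fun k => mem_iInter.1 hf k
end

section
/- Let (K, ρ) be a compact perfect metric space and d ≥ 1. Then the generic continuous map f ∈ C(K, ℝ^d) satisfies: for every x ∈ K, limsup_{y→x} |f(x) - f(y)| / ρ(x,y) = ∞. In particular, the set of such f is comeager in C(K, ℝ^d). -/
/-!
Banach–Mazurkiewicz argument. The maps that are `C`-Lipschitz from some point at scale `δ` form
a closed set (a projection along the compact factor of `C(X, E) × X`), and it is nowhere dense:
approximate `f` by a Lipschitz map `h` (Stone–Weierstrass), then add `M • dist(·, F) • v` for a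
unit vector `v`, a steep slope `M` and a fine finite net `F`. In a perfect space every point `x`
has arbitrarily close points `y ≠ x` with `|dist(x, F) - dist(y, F)| = dist x y`: the nearest net
point if `x ∉ F`, any point close enough to `x` if `x ∈ F`. Taking `C = n` and
`δ = 1 / (n + 1)` gives countably many closed nowhere dense sets, and a map outside all of them
has unbounded difference quotients at every point.
-/
open Metric Set Filter Topology NNReal

theorem LipschitzWith.mul_of_norm_le {α R : Type*} [PseudoMetricSpace α] [SeminormedRing R]
    {f g : α → R} {Kf Kg a b : ℝ≥0} (hf : LipschitzWith Kf f) (hg : LipschitzWith Kg g)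
    (ha : ∀ x, ‖f x‖ ≤ a) (hb : ∀ x, ‖g x‖ ≤ b) :
    LipschitzWith (a * Kg + b * Kf) (f * g) := by
  refine LipschitzWith.of_dist_le_mul fun x y => ?_
  have hfxy : ‖f x - f y‖ ≤ Kf * dist x y := by simpa [dist_eq_norm] using hf.dist_le_mul x y
  have hgxy : ‖g x - g y‖ ≤ Kg * dist x y := by simpa [dist_eq_norm] using hg.dist_le_mul x y
  rw [dist_eq_norm, Pi.mul_apply, Pi.mul_apply]
  calc ‖f x * g x - f y * g y‖ = ‖f x * (g x - g y) + (f x - f y) * g y‖ := by noncomm_ring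
    _ ≤ ‖f x‖ * ‖g x - g y‖ + ‖f x - f y‖ * ‖g y‖ :=
        norm_add_le_of_le (norm_mul_le _ _) (norm_mul_le _ _)
    _ ≤ a * (Kg * dist x y) + Kf * dist x y * b := by
        have := ha x
        have := hb y
        gcongr
    _ = ↑(a * Kg + b * Kf) * dist x y := by push_cast; ring

namespace ContinuousMap

section Lipschitz

variable (X : Type*) [MetricSpace X] [CompactSpace X]

def lipschitzSubalgebra : Subalgebra ℝ C(X, ℝ) where
  carrier := {f | ∃ K, LipschitzWith K f}
  mul_mem' := by
    rintro f g ⟨Kf, hf⟩ ⟨Kg, hg⟩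
    exact ⟨_, hf.mul_of_norm_le (a := ‖f‖₊) (b := ‖g‖₊) hg f.norm_coe_le_norm g.norm_coe_le_norm⟩
  add_mem' := by
    rintro f g ⟨Kf, hf⟩ ⟨Kg, hg⟩
    exact ⟨_, hf.add hg⟩
  algebraMap_mem' r := ⟨0, LipschitzWith.const r⟩

theorem lipschitzSubalgebra_separatesPoints : (lipschitzSubalgebra X).SeparatesPoints :=
  fun x y hxy => ⟨_, ⟨⟨(dist · y), by fun_prop⟩, by exact ⟨1, LipschitzWith.dist_left y⟩, rfl⟩,
    by simpa using hxy⟩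

variable {X} {E : Type*} [NormedAddCommGroup E] [NormedSpace ℝ E] [FiniteDimensional ℝ E]

theorem exists_lipschitzWith_dist_lt (f : C(X, E)) {ε : ℝ} (hε : 0 < ε) :
    ∃ g : C(X, E), (∃ K, LipschitzWith K g) ∧ dist g f < ε := by
  let e := (Module.finBasis ℝ E).equivFunL
  obtain ⟨C, hC⟩ : ∃ C, LipschitzWith C e.symm := ⟨_, e.symm.lipschitz⟩
  set ε' := ε / (C + 1) with hε'
  have hε'pos : 0 < ε' := by positivity
  have hcoord (i) : ∃ g : lipschitzSubalgebra X,
      ‖(g : C(X, ℝ)) - ⟨fun x => e (f x) i, by fun_prop⟩‖ < ε' :=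
    exists_mem_subalgebra_near_continuousMap_of_separatesPoints _
      (lipschitzSubalgebra_separatesPoints X) _ _ hε'pos
  choose g hg using hcoord
  choose K hK using fun i => (g i).2
  have hpi : LipschitzWith (∑ i, K i) fun x i => (g i : C(X, ℝ)) x :=
    LipschitzWith.of_dist_le_mul fun x y => (dist_pi_le_iff (by positivity)).2 fun i =>
      ((hK i).dist_le_mul x y).trans <| by
        gcongr
        exact Finset.single_le_sum (f := K) (fun j _ => (K j).2) (Finset.mem_univ i)
  refine ⟨⟨fun x => e.symm fun i => (g i : C(X, ℝ)) x, by fun_prop⟩,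
    ⟨_, hC.comp hpi⟩, (dist_lt_iff hε).2 fun x => ?_⟩
  have hclose : dist (fun i => (g i : C(X, ℝ)) x) (e (f x)) < ε' :=
    (dist_pi_lt_iff hε'pos).2 fun i =>
      (dist_apply_le_dist (g := ⟨fun x => e (f x) i, by fun_prop⟩) x).trans_lt
        (by rw [dist_eq_norm]; exact hg i)
  calc dist (e.symm fun i => (g i : C(X, ℝ)) x) (f x)
      = dist (e.symm fun i => (g i : C(X, ℝ)) x) (e.symm (e (f x))) := by simp
    _ ≤ C * dist (fun i => (g i : C(X, ℝ)) x) (e (f x)) := hC.dist_le_mul _ _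
    _ ≤ C * ε' := by gcongr
    _ < ε := by
        rw [hε', mul_div_left_comm]
        exact mul_lt_of_lt_one_right hε ((div_lt_one (by positivity)).2 (lt_add_one _))

end Lipschitz

end ContinuousMap

section NearestNetPoint

variable {X : Type*} [MetricSpace X]

theorem Set.Finite.eventually_infDist_eq_dist {F : Set X} (hF : F.Finite) {x : X} (hx : x ∈ F) :
    ∀ᶠ y in 𝓝 x, infDist y F = dist y x := by
  have hcloser : ∀ᶠ y in 𝓝 x, ∀ q ∈ F \ {x}, dist y x < dist y q :=
    (hF.sdiff.eventually_all).2 fun q hq =>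
      (continuous_id.dist continuous_const).continuousAt.eventually_lt
        (continuous_id.dist continuous_const).continuousAt
        (by simpa [eq_comm] using hq.2)
  filter_upwards [hcloser] with y hy
  refine le_antisymm (infDist_le_dist_of_mem hx) ((le_infDist ⟨x, hx⟩).2 fun q hq => ?_)
  rcases eq_or_ne q x with rfl | hqx
  · exact le_rfl
  · exact (hy q ⟨hq, hqx⟩).le

theorem exists_ne_dist_lt_abs_infDist_sub_eq_dist [∀ x : X, (𝓝[≠] x).NeBot] {F : Set X}
    (hF : F.Finite) (hFne : F.Nonempty) {x : X} {r : ℝ} (hx : infDist x F < r) :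
    ∃ y, y ≠ x ∧ dist x y < r ∧ |infDist x F - infDist y F| = dist x y := by
  by_cases hxF : x ∈ F
  · have hr : 0 < r := infDist_nonneg.trans_lt hx
    obtain ⟨y, ⟨hyF, hyr⟩, hyx⟩ :=
      ((((hF.eventually_infDist_eq_dist hxF).and (ball_mem_nhds x hr)).filter_mono
        nhdsWithin_le_nhds).and (eventually_mem_nhdsWithin (s := {x}ᶜ))).exists
    refine ⟨y, hyx, by rwa [dist_comm], ?_⟩
    rw [infDist_zero_of_mem hxF, hyF, zero_sub, abs_neg, abs_of_nonneg dist_nonneg, dist_comm]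
  · obtain ⟨y, hyF, hxy⟩ := hF.isCompact.exists_infDist_eq_dist hFne x
    refine ⟨y, fun h => hxF (h ▸ hyF), hxy ▸ hx, ?_⟩
    rw [infDist_zero_of_mem hyF, sub_zero, hxy, abs_of_nonneg dist_nonneg]

end NearestNetPoint

theorem exists_pos_forall_dist_le_of_not_frequently {X Y : Type*} [MetricSpace X]
    [PseudoMetricSpace Y] {f : X → Y} {x : X} {C : ℝ}
    (h : ¬∃ᶠ y in 𝓝[≠] x, C < dist (f x) (f y) / dist x y) :
    ∃ δ > 0, ∀ y, dist x y < δ → dist (f x) (f y) ≤ C * dist x y := by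
  rw [not_frequently, eventually_nhdsWithin_iff, Metric.eventually_nhds_iff] at h
  obtain ⟨δ, hδ, hle⟩ := h
  refine ⟨δ, hδ, fun y hy => ?_⟩
  rcases eq_or_ne y x with rfl | hyx
  · simp
  · exact (div_le_iff₀ (dist_pos.2 hyx.symm)).1 (not_lt.1 (hle (by rwa [dist_comm]) hyx))

namespace ContinuousMap

variable {X E : Type*} [MetricSpace X]

def lipschitzAtSomePoint [PseudoMetricSpace E] (C δ : ℝ) : Set C(X, E) :=
  {f | ∃ x, ∀ y, dist x y < δ → dist (f x) (f y) ≤ C * dist x y}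

theorem lipschitzAtSomePoint_mono [PseudoMetricSpace E] {C C' δ δ' : ℝ} (hC : C ≤ C')
    (hδ : δ' ≤ δ) : lipschitzAtSomePoint (X := X) (E := E) C δ ⊆ lipschitzAtSomePoint C' δ' :=
  fun _ ⟨x, hx⟩ => ⟨x, fun y hy =>
    (hx y (hy.trans_le hδ)).trans (mul_le_mul_of_nonneg_right hC dist_nonneg)⟩

theorem isClosed_lipschitzAtSomePoint [CompactSpace X] [PseudoMetricSpace E] (C δ : ℝ) :
    IsClosed (lipschitzAtSomePoint (X := X) (E := E) C δ) := by
  have hclosed : IsClosed {p : C(X, E) × X |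
      ∀ y, dist p.2 y < δ → dist (p.1 p.2) (p.1 y) ≤ C * dist p.2 y} := by
    simp only [ofPred_forall]
    exact isClosed_iInter fun y => isClosed_imp (isOpen_lt (by fun_prop) continuous_const)
      (isClosed_le (by fun_prop) (by fun_prop))
  convert isClosedMap_fst_of_compactSpace _ hclosed
  ext f
  simp [lipschitzAtSomePoint]

variable [CompactSpace X] [∀ x : X, (𝓝[≠] x).NeBot]
  [NormedAddCommGroup E] [NormedSpace ℝ E] [Nontrivial E]

/-- A Lipschitz map plus a small sawtooth of slope `M > L + |C|` along a unit vector. -/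
theorem exists_dist_lt_notMem_lipschitzAtSomePoint {h : C(X, E)} {L : ℝ≥0}
    (hh : LipschitzWith L h) (C : ℝ) {δ η : ℝ} (hδ : 0 < δ) (hη : 0 < η) :
    ∃ g : C(X, E), dist g h < η ∧ g ∉ lipschitzAtSomePoint C δ := by
  obtain ⟨v, hv⟩ := exists_norm_eq E zero_le_one
  set M : ℝ := L + |C| + 1
  have hM : 0 < M := by positivity
  set s := min δ (η / M)
  obtain ⟨F, -, hF, hFcover⟩ :=
    finite_cover_balls_of_compact (isCompact_univ (X := X)) (lt_min hδ (div_pos hη hM))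
  have hnet (x : X) : ∃ p ∈ F, dist x p < s := by
    simpa only [mem_iUnion₂, mem_ball, exists_prop] using hFcover (mem_univ x)
  have hinfDist (x : X) : infDist x F < s :=
    let ⟨_, hp, hxp⟩ := hnet x; (infDist_le_dist_of_mem hp).trans_lt hxp
  let g : C(X, E) := ⟨fun x => h x + (M * infDist x F) • v, by fun_prop⟩
  refine ⟨g, (dist_lt_iff hη).2 fun x => ?_, ?_⟩
  · calc dist (g x) (h x) = M * infDist x F := by
          simp [g, norm_smul, hv, abs_of_nonneg infDist_nonneg, hM.le]
      _ < M * (η / M) := by gcongr; exact (hinfDist x).trans_le (min_le_right _ _)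
      _ = η := by field_simp
  · rintro ⟨x, hx⟩
    obtain ⟨y, hyx, hxy, hslope⟩ := exists_ne_dist_lt_abs_infDist_sub_eq_dist hF
      (let ⟨p, hp, _⟩ := hnet x; ⟨p, hp⟩) (hinfDist x)
    have hpos : 0 < dist x y := dist_pos.2 hyx.symm
    have hsplit : (M * (infDist x F - infDist y F)) • v = (g x - g y) - (h x - h y) := by
      simp only [g, coe_mk, mul_sub, sub_smul]; abel
    have hlower : M * dist x y ≤ dist (g x) (g y) + L * dist x y :=
      calc M * dist x y = ‖(M * (infDist x F - infDist y F)) • v‖ := by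
            rw [norm_smul, hv, mul_one, norm_mul, Real.norm_eq_abs, Real.norm_eq_abs, hslope,
              abs_of_pos hM]
        _ ≤ ‖g x - g y‖ + ‖h x - h y‖ := hsplit ▸ norm_sub_le _ _
        _ ≤ dist (g x) (g y) + L * dist x y := by
            rw [← dist_eq_norm, ← dist_eq_norm]
            gcongr
            exact hh.dist_le_mul x y
    have hC := hx y (hxy.trans_le (min_le_left _ _))
    nlinarith [le_abs_self C]

variable [FiniteDimensional ℝ E]

theorem dense_compl_lipschitzAtSomePoint (C : ℝ) {δ : ℝ} (hδ : 0 < δ) :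
    Dense (lipschitzAtSomePoint (X := X) (E := E) C δ)ᶜ := by
  refine Metric.dense_iff.2 fun f r hr => ?_
  obtain ⟨h, ⟨L, hL⟩, hhf⟩ := exists_lipschitzWith_dist_lt f (half_pos hr)
  obtain ⟨g, hgh, hg⟩ := exists_dist_lt_notMem_lipschitzAtSomePoint hL C hδ (half_pos hr)
  exact ⟨g, mem_ball.2 (by linarith [dist_triangle g h f]), hg⟩


theorem residual_setOf_forall_frequently_lt_dist_div_dist :
    {f : C(X, E) | ∀ x C, ∃ᶠ y in 𝓝[≠] x, C < dist (f x) (f y) / dist x y} ∈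
      residual C(X, E) := by
  have hres : (⋂ n : ℕ, (lipschitzAtSomePoint (X := X) (E := E) n (1 / (n + 1)))ᶜ) ∈
      residual C(X, E) :=
    countable_iInter_mem.2 fun n => residual_of_dense_open
      (isClosed_lipschitzAtSomePoint _ _).isOpen_compl
      (dense_compl_lipschitzAtSomePoint _ Nat.one_div_pos_of_nat)
  refine mem_of_superset hres fun f hf x C => by_contra fun hC => ?_
  obtain ⟨δ, hδ, hfx⟩ := exists_pos_forall_dist_le_of_not_frequently hC
  obtain ⟨n, hCn, hnδ⟩ : ∃ n : ℕ, C ≤ n ∧ 1 / ((n : ℝ) + 1) < δ := by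
    obtain ⟨n₁, hn₁⟩ := exists_nat_ge C
    obtain ⟨n₂, hn₂⟩ := exists_nat_one_div_lt hδ
    refine ⟨max n₁ n₂, hn₁.trans (by simp), lt_of_le_of_lt ?_ hn₂⟩
    gcongr
    exact le_max_right _ _
  exact mem_iInter.1 hf n (lipschitzAtSomePoint_mono hCn hnδ.le ⟨x, hfx⟩)

end ContinuousMap

/-- For a compact perfect metric space `K` and `d ≥ 1`, the generic continuous
map `f : K → ℝ^d` satisfies `limsup_{y→x} ‖f x - f y‖ / ρ(x,y) = ∞` at every
point `x ∈ K`; that is, the set of such `f` is comeager in `C(K, ℝ^d)`. -/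
theorem stmt10 (d : ℕ) (hd : 1 ≤ d) (K : Type*) [MetricSpace K] [CompactSpace K]
    (hperf : ∀ x : K, Filter.NeBot (𝓝[≠] x)) :
    {f : C(K, EuclideanSpace ℝ (Fin d)) | ∀ x : K, ∀ C : ℝ,
        ∃ᶠ y in 𝓝[≠] x, C < ‖f x - f y‖ / dist x y} ∈
      residual C(K, EuclideanSpace ℝ (Fin d)) := by
  have : Nonempty (Fin d) := ⟨⟨0, hd⟩⟩
  simpa only [dist_eq_norm] using
    ContinuousMap.residual_setOf_forall_frequently_lt_dist_div_dist (X := K)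
      (E := EuclideanSpace ℝ (Fin d))
end

section
/- Let s_n be a sequence of reals with s_n ↓ 0. Then there exist a sequence q_n ↓ 0 and a continuous function φ : [0,1] → [0,1] such that for all n ∈ ℕ, whenever I ⊆ [0,1] is an interval of length 2^{-n} and J is an interval of length s_n, we have λ({z ∈ I : φ(z) ∈ J}) ≤ q_n · λ(I). -/
/-!
Take `φ = ∑ₖ cₖ T(2^{fₖ} x)` with `T` the triangle wave (twice the distance to `ℤ`),
`cₖ = 2^{-(k+1)²}` and frequencies `fₖ` growing fast. For `f_{k-1} ≤ n < fₖ`, cut `I` into the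
`≈ |I| 2^{fₖ+1}` intervals of length `2^{-fₖ-1}` on which the `k`-th term is affine with slope
`± cₖ 2^{fₖ+1}`. On such an interval the earlier terms, being `2^{f_{k-1}+2}`-Lipschitz, move by at
most `2^{-k} cₖ`; the later terms lie in `[0, 2^{-k} cₖ]`; and `|J| = sₙ ≤ 2^{-k} cₖ` once
`f_{k-1}` is past the corresponding threshold of `s`. Hence `φ⁻¹ J` meets each interval in
measure at most `3 · 2^{-k} / 2^{fₖ+1}`, and `λ(I ∩ φ⁻¹ J) ≤ 6 · 2^{-k} λ(I)`.
-/

open MeasureTheory Set Filter Topology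

noncomputable def triangleWave (x : ℝ) : ℝ := 2 * ‖(x : UnitAddCircle)‖

lemma triangleWave_nonneg (x : ℝ) : 0 ≤ triangleWave x := by
  unfold triangleWave; positivity

lemma triangleWave_le_one (x : ℝ) : triangleWave x ≤ 1 := by
  have := AddCircle.norm_le_half_period 1 (x := (x : UnitAddCircle)) one_ne_zero
  rw [abs_one] at this
  unfold triangleWave; linarith

lemma triangleWave_neg (x : ℝ) : triangleWave (-x) = triangleWave x := by
  rw [triangleWave, AddCircle.coe_neg, norm_neg, triangleWave]

lemma lipschitzWith_triangleWave : LipschitzWith 2 triangleWave := by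
  refine LipschitzWith.of_dist_le_mul fun x y => ?_
  have : ‖((x - y : ℝ) : UnitAddCircle)‖ ≤ ‖x - y‖ := QuotientAddGroup.norm_mk_le_norm
  rw [AddCircle.coe_sub] at this
  rw [triangleWave, triangleWave, Real.dist_eq, Real.dist_eq, ← mul_sub, abs_mul, abs_two]
  exact mul_le_mul_of_nonneg_left ((abs_norm_sub_norm_le _ _).trans this) zero_le_two

lemma continuous_triangleWave : Continuous triangleWave :=
  lipschitzWith_triangleWave.continuous

lemma triangleWave_eq_two_mul_abs_sub {x : ℝ} (j : ℤ) (hx : |x - j| ≤ 1 / 2) :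
    triangleWave x = 2 * |x - j| := by
  have hj : ((j : ℝ) : UnitAddCircle) = 0 :=
    (AddCircle.coe_eq_zero_iff _).2 ⟨j, by simp⟩
  have := (AddCircle.norm_coe_eq_abs_iff (p := (1 : ℝ)) (x := x - j) one_ne_zero).2
    (by simpa using hx)
  rw [AddCircle.coe_sub, hj, sub_zero] at this
  rw [triangleWave, this]

lemma abs_triangleWave_sub_eq {x y : ℝ} (m : ℤ) (hx : x ∈ Icc (m / 2 : ℝ) ((m + 1) / 2))
    (hy : y ∈ Icc (m / 2 : ℝ) ((m + 1) / 2)) :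
    |triangleWave x - triangleWave y| = 2 * |x - y| := by
  have even_case (j : ℤ) (x y : ℝ) (hx : x ∈ Icc (j : ℝ) (j + 1 / 2))
      (hy : y ∈ Icc (j : ℝ) (j + 1 / 2)) :
      |triangleWave x - triangleWave y| = 2 * |x - y| := by
    rw [triangleWave_eq_two_mul_abs_sub j (abs_le.2 ⟨by linarith [hx.1], by linarith [hx.2]⟩),
      triangleWave_eq_two_mul_abs_sub j (abs_le.2 ⟨by linarith [hy.1], by linarith [hy.2]⟩),
      abs_of_nonneg (sub_nonneg.2 hx.1), abs_of_nonneg (sub_nonneg.2 hy.1), ← mul_sub, abs_mul,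
      abs_two, sub_sub_sub_cancel_right]
  obtain ⟨j, rfl | rfl⟩ := Int.even_or_odd' m
  · push_cast at hx hy
    exact even_case j x y ⟨by linarith [hx.1], by linarith [hx.2]⟩
      ⟨by linarith [hy.1], by linarith [hy.2]⟩
  · push_cast at hx hy
    have := even_case (-(j + 1)) (-x) (-y) (by push_cast; constructor <;> linarith [hx.1, hx.2])
      (by push_cast; constructor <;> linarith [hy.1, hy.2])
    rwa [triangleWave_neg, triangleWave_neg, neg_sub_neg, abs_sub_comm y] at this

lemma volume_sep_add_mem_Icc_le {S : Set ℝ} {g R : ℝ → ℝ} {L w lo hi : ℝ} (hL : 0 < L)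
    (hg : ∀ x ∈ S, ∀ y ∈ S, L * |x - y| ≤ |g x - g y|)
    (hR : ∀ x ∈ S, ∀ y ∈ S, |R x - R y| ≤ w) :
    volume {x ∈ S | g x + R x ∈ Icc lo hi} ≤ ENNReal.ofReal ((hi - lo + w) / L) := by
  refine (Real.volume_le_diam _).trans (Metric.ediam_le fun x hx y hy => ?_)
  rw [edist_dist, Real.dist_eq]
  refine ENNReal.ofReal_le_ofReal ((le_div_iff₀' hL).2 ((hg x hx.1 y hy.1).trans ?_))
  have hψ : |(g x + R x) - (g y + R y)| ≤ hi - lo :=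
    abs_sub_le_of_le_of_le hx.2.1 hx.2.2 hy.2.1 hy.2.2
  calc |g x - g y| = |((g x + R x) - (g y + R y)) - (R x - R y)| := by ring_nf
    _ ≤ |(g x + R x) - (g y + R y)| + |R x - R y| := abs_sub _ _
    _ ≤ hi - lo + w := add_le_add hψ (hR x hx.1 y hy.1)

lemma volume_sep_Icc_le_of_forall_Icc_intCast_div {p : ℝ → Prop} {M ℓ : ℝ} (a b : ℝ)
    (hM : 0 < M) (h : ∀ m : ℤ, volume {z ∈ Icc (m / M) ((m + 1) / M) | p z} ≤ ENNReal.ofReal ℓ) :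
    volume {z ∈ Icc a b | p z} ≤ ENNReal.ofReal ((b - a) * M + 2) * ENNReal.ofReal ℓ := by
  have hcover : {z ∈ Icc a b | p z} ⊆
      ⋃ m ∈ Finset.Icc ⌊a * M⌋ ⌊b * M⌋, {z ∈ Icc (m / M) ((m + 1) / M) | p z} := by
    rintro z ⟨hz, hpz⟩
    refine mem_biUnion (x := ⌊z * M⌋) ?_ ⟨⟨?_, ?_⟩, hpz⟩
    · exact Finset.mem_Icc.2 ⟨Int.floor_le_floor (by gcongr; exact hz.1),
        Int.floor_le_floor (by gcongr; exact hz.2)⟩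
    · exact (div_le_iff₀ hM).2 (Int.floor_le _)
    · exact (le_div_iff₀ hM).2 (Int.lt_floor_add_one _).le
  have hcard :
      ((Finset.Icc ⌊a * M⌋ ⌊b * M⌋).card : ENNReal) ≤ ENNReal.ofReal ((b - a) * M + 2) := by
    rw [Int.card_Icc, ← ENNReal.ofReal_natCast, ENNReal.ofReal_le_ofReal_iff']
    rcases le_or_gt (⌊b * M⌋ + 1 - ⌊a * M⌋) 0 with hle | hpos
    · right; simp [Int.toNat_of_nonpos hle]
    · left
      have hb : (⌊b * M⌋ : ℝ) ≤ b * M := Int.floor_le _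
      have ha : a * M - 1 < ⌊a * M⌋ := Int.sub_one_lt_floor _
      have : ((⌊b * M⌋ + 1 - ⌊a * M⌋).toNat : ℝ) = ⌊b * M⌋ + 1 - ⌊a * M⌋ := by
        exact_mod_cast Int.toNat_of_nonneg hpos.le
      rw [this]; linarith
  calc volume {z ∈ Icc a b | p z}
      ≤ ∑ m ∈ Finset.Icc ⌊a * M⌋ ⌊b * M⌋, volume {z ∈ Icc (m / M) ((m + 1) / M) | p z} :=
        (measure_mono hcover).trans (measure_biUnion_finset_le _ _)
    _ ≤ ∑ _m ∈ Finset.Icc ⌊a * M⌋ ⌊b * M⌋, ENNReal.ofReal ℓ := Finset.sum_le_sum fun m _ => h m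
    _ ≤ ENNReal.ofReal ((b - a) * M + 2) * ENNReal.ofReal ℓ := by
        rw [Finset.sum_const, nsmul_eq_mul]; gcongr

noncomputable def lacunaryCoeff (k : ℕ) : ℝ := 2⁻¹ ^ ((k + 1) ^ 2)

lemma lacunaryCoeff_pos (k : ℕ) : 0 < lacunaryCoeff k := by
  unfold lacunaryCoeff; positivity

lemma lacunaryCoeff_le_two_inv_pow {k i : ℕ} (h : i ≤ (k + 1) ^ 2) : lacunaryCoeff k ≤ 2⁻¹ ^ i :=
  pow_le_pow_of_le_one (by norm_num) (by norm_num) h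

lemma summable_lacunaryCoeff : Summable lacunaryCoeff :=
  .of_nonneg_of_le (fun k => (lacunaryCoeff_pos k).le)
    (fun k => lacunaryCoeff_le_two_inv_pow (by nlinarith))
    (summable_geometric_of_lt_one (by norm_num) (by norm_num))

lemma tsum_lacunaryCoeff_le_one : ∑' k, lacunaryCoeff k ≤ 1 := by
  calc ∑' k, lacunaryCoeff k ≤ ∑' k : ℕ, 2⁻¹ ^ k * 2⁻¹ :=
        summable_lacunaryCoeff.tsum_le_tsum
          (fun k => (lacunaryCoeff_le_two_inv_pow (by nlinarith)).trans_eq (pow_succ _ _))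
          ((summable_geometric_of_lt_one (by norm_num) (by norm_num)).mul_right _)
    _ = 1 := by
        rw [tsum_mul_right, tsum_geometric_of_lt_one (by norm_num) (by norm_num)]; norm_num

lemma tsum_lacunaryCoeff_nat_add_le (k : ℕ) :
    ∑' i, lacunaryCoeff (i + (k + 1)) ≤ 2⁻¹ ^ k * lacunaryCoeff k := by
  have hgeom : Summable fun i : ℕ => (2⁻¹ : ℝ) ^ i :=
    summable_geometric_of_lt_one (by norm_num) (by norm_num)
  have h1 : Summable fun i => lacunaryCoeff (i + (k + 1)) :=
    (summable_nat_add_iff (k + 1)).2 summable_lacunaryCoeff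
  have h2 : ∀ i, lacunaryCoeff (i + (k + 1)) ≤ (2⁻¹ : ℝ) ^ ((k + 2) ^ 2) * 2⁻¹ ^ i := fun i =>
    (lacunaryCoeff_le_two_inv_pow (by ring_nf; nlinarith)).trans_eq (pow_add _ _ _)
  calc ∑' i, lacunaryCoeff (i + (k + 1)) ≤ ∑' i : ℕ, (2⁻¹ : ℝ) ^ ((k + 2) ^ 2) * 2⁻¹ ^ i :=
        h1.tsum_le_tsum h2 (hgeom.mul_left _)
    _ = 2⁻¹ ^ ((k + 2) ^ 2) * 2 := by
        rw [tsum_mul_left, tsum_geometric_of_lt_one (by norm_num) (by norm_num)]; norm_num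
    _ ≤ 2⁻¹ ^ (k + (k + 1) ^ 2 + 1) * 2 :=
        mul_le_mul_of_nonneg_right
          (pow_le_pow_of_le_one (by norm_num) (by norm_num) (by ring_nf; omega)) zero_le_two
    _ = 2⁻¹ ^ k * lacunaryCoeff k := by rw [lacunaryCoeff]; ring

lemma sum_range_two_pow_le {f : ℕ → ℕ} (hf : StrictMono f) (j : ℕ) :
    ∑ i ∈ Finset.range (j + 1), (2 : ℝ) ^ f i ≤ 2 ^ (f j + 1) := by
  induction j with
  | zero => simp [pow_succ]
  | succ j ih =>
    rw [Finset.sum_range_succ, pow_succ, mul_two]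
    gcongr
    exact ih.trans (pow_le_pow_right₀ one_le_two (hf j.lt_succ_self))

noncomputable def lacunaryTerm (f : ℕ → ℕ) (k : ℕ) (x : ℝ) : ℝ :=
  lacunaryCoeff k * triangleWave (2 ^ f k * x)

noncomputable def lacunaryWave (f : ℕ → ℕ) (x : ℝ) : ℝ := ∑' k, lacunaryTerm f k x

section lacunaryWave

variable (f : ℕ → ℕ)

lemma lacunaryTerm_nonneg (k : ℕ) (x : ℝ) : 0 ≤ lacunaryTerm f k x :=
  mul_nonneg (lacunaryCoeff_pos k).le (triangleWave_nonneg _)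

lemma lacunaryTerm_le (k : ℕ) (x : ℝ) : lacunaryTerm f k x ≤ lacunaryCoeff k :=
  mul_le_of_le_one_right (lacunaryCoeff_pos k).le (triangleWave_le_one _)

lemma summable_lacunaryTerm (x : ℝ) : Summable (lacunaryTerm f · x) :=
  .of_nonneg_of_le (lacunaryTerm_nonneg f · x) (lacunaryTerm_le f · x) summable_lacunaryCoeff

lemma abs_lacunaryTerm_sub_le (k : ℕ) (x y : ℝ) :
    |lacunaryTerm f k x - lacunaryTerm f k y| ≤ 2 ^ (f k + 1) * |x - y| := by
  have htw : |triangleWave (2 ^ f k * x) - triangleWave (2 ^ f k * y)| ≤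
      2 * |2 ^ f k * x - 2 ^ f k * y| := by
    simpa only [Real.dist_eq, NNReal.coe_ofNat] using lipschitzWith_triangleWave.dist_le_mul _ _
  rw [lacunaryTerm, lacunaryTerm, ← mul_sub, abs_mul, abs_of_pos (lacunaryCoeff_pos k)]
  calc lacunaryCoeff k * |triangleWave (2 ^ f k * x) - triangleWave (2 ^ f k * y)|
      ≤ 1 * (2 * |2 ^ f k * x - 2 ^ f k * y|) := by
        gcongr
        exact (lacunaryCoeff_le_two_inv_pow (Nat.zero_le _)).trans_eq (pow_zero _)
    _ = 2 ^ (f k + 1) * |x - y| := by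
        rw [← mul_sub, abs_mul, abs_of_pos (by positivity : (0 : ℝ) < 2 ^ f k)]; ring

lemma continuous_lacunaryWave : Continuous (lacunaryWave f) :=
  continuous_tsum (fun _ => continuous_const.mul (continuous_triangleWave.comp
    (continuous_const.mul continuous_id))) summable_lacunaryCoeff
    fun k x => (Real.norm_of_nonneg (lacunaryTerm_nonneg f k x)).trans_le (lacunaryTerm_le f k x)

lemma lacunaryWave_mem_Icc (x : ℝ) : lacunaryWave f x ∈ Icc 0 1 :=
  ⟨tsum_nonneg (lacunaryTerm_nonneg f · x),
    ((summable_lacunaryTerm f x).tsum_le_tsum (lacunaryTerm_le f · x) summable_lacunaryCoeff).trans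
      tsum_lacunaryCoeff_le_one⟩

lemma lacunaryWave_eq_add (k : ℕ) (x : ℝ) :
    lacunaryWave f x = lacunaryTerm f k x +
      (∑ i ∈ Finset.range k, lacunaryTerm f i x + ∑' i, lacunaryTerm f (i + (k + 1)) x) := by
  rw [lacunaryWave, ← (summable_lacunaryTerm f x).sum_add_tsum_nat_add (k + 1),
    Finset.sum_range_succ]
  ring

lemma tsum_lacunaryTerm_nat_add_mem_Icc (k : ℕ) (x : ℝ) :
    ∑' i, lacunaryTerm f (i + (k + 1)) x ∈ Icc 0 (2⁻¹ ^ k * lacunaryCoeff k) :=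
  ⟨tsum_nonneg fun _ => lacunaryTerm_nonneg f _ x,
    (((summable_nat_add_iff (k + 1)).2 (summable_lacunaryTerm f x)).tsum_le_tsum
      (fun _ => lacunaryTerm_le f _ x)
      ((summable_nat_add_iff (k + 1)).2 summable_lacunaryCoeff)).trans
      (tsum_lacunaryCoeff_nat_add_le k)⟩

lemma abs_lacunaryTerm_sub_eq (k : ℕ) (m : ℤ) {x y : ℝ}
    (hx : x ∈ Icc ((m : ℝ) / (2 * 2 ^ f k)) ((m + 1) / (2 * 2 ^ f k)))
    (hy : y ∈ Icc ((m : ℝ) / (2 * 2 ^ f k)) ((m + 1) / (2 * 2 ^ f k))) :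
    |lacunaryTerm f k x - lacunaryTerm f k y| = lacunaryCoeff k * (2 * 2 ^ f k) * |x - y| := by
  have hP : (0 : ℝ) < 2 ^ f k := by positivity
  have hscale {z : ℝ} (hz : z ∈ Icc ((m : ℝ) / (2 * 2 ^ f k)) ((m + 1) / (2 * 2 ^ f k))) :
      2 ^ f k * z ∈ Icc (m / 2 : ℝ) ((m + 1) / 2) := by
    have h2P : (0 : ℝ) < 2 * 2 ^ f k := by positivity
    obtain ⟨h1, h2⟩ := hz
    rw [div_le_iff₀ h2P] at h1
    rw [le_div_iff₀ h2P] at h2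
    constructor
    · rw [div_le_iff₀ two_pos]; linarith
    · rw [le_div_iff₀ two_pos]; linarith
  rw [lacunaryTerm, lacunaryTerm, ← mul_sub, abs_mul, abs_of_pos (lacunaryCoeff_pos k),
    abs_triangleWave_sub_eq m (hscale hx) (hscale hy), ← mul_sub, abs_mul, abs_of_pos hP]
  ring

end lacunaryWave

lemma abs_sum_lacunaryTerm_sub_le {f : ℕ → ℕ} (hf : StrictMono f) (j : ℕ) (x y : ℝ) :
    |∑ i ∈ Finset.range (j + 1), lacunaryTerm f i x -
        ∑ i ∈ Finset.range (j + 1), lacunaryTerm f i y| ≤ 2 ^ (f j + 2) * |x - y| := by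
  rw [← Finset.sum_sub_distrib]
  calc _ ≤ ∑ i ∈ Finset.range (j + 1), 2 ^ (f i + 1) * |x - y| :=
        (Finset.abs_sum_le_sum_abs _ _).trans
          (Finset.sum_le_sum fun i _ => abs_lacunaryTerm_sub_le f i x y)
    _ = 2 * (∑ i ∈ Finset.range (j + 1), (2 : ℝ) ^ f i) * |x - y| := by
        rw [← Finset.sum_mul, Finset.mul_sum]; simp only [pow_succ, mul_comm]
    _ ≤ 2 * 2 ^ (f j + 1) * |x - y| := by gcongr; exact sum_range_two_pow_le hf j
    _ = 2 ^ (f j + 2) * |x - y| := by ring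

lemma two_pow_div_le_of_gap {f : ℕ → ℕ} {j : ℕ} (hgap : f j + ((j + 2) ^ 2 + j + 2) ≤ f (j + 1)) :
    2 ^ (f j + 2) / (2 * 2 ^ f (j + 1)) ≤ (2⁻¹ : ℝ) ^ (j + 1) * lacunaryCoeff (j + 1) := by
  have hexp : (2 : ℝ) ^ (f j + 2) * 2 ^ (j + 1 + (j + 1 + 1) ^ 2) ≤ 2 * 2 ^ f (j + 1) := by
    rw [← pow_add, ← pow_succ']
    exact pow_le_pow_right₀ one_le_two (by rw [show (j + 1 + 1) ^ 2 = (j + 2) ^ 2 from rfl]; omega)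
  rw [lacunaryCoeff, inv_pow, inv_pow, ← mul_inv, ← pow_add, div_le_iff₀ (by positivity),
    ← div_eq_inv_mul, le_div_iff₀ (by positivity)]
  exact hexp

lemma volume_sep_Icc_intCast_div_lacunaryWave_le {f : ℕ → ℕ} (hf : StrictMono f) (j : ℕ) (m : ℤ)
    (c e : ℝ) :
    volume {z ∈ Icc ((m : ℝ) / (2 * 2 ^ f (j + 1))) ((m + 1) / (2 * 2 ^ f (j + 1))) |
        lacunaryWave f z ∈ Icc c e} ≤
      ENNReal.ofReal ((e - c + (2 ^ (f j + 2) / (2 * 2 ^ f (j + 1)) +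
          2⁻¹ ^ (j + 1) * lacunaryCoeff (j + 1))) /
        (lacunaryCoeff (j + 1) * (2 * 2 ^ f (j + 1)))) := by
  simp only [lacunaryWave_eq_add f (j + 1)]
  refine volume_sep_add_mem_Icc_le (by have := lacunaryCoeff_pos (j + 1); positivity)
    (fun x hx y hy => (abs_lacunaryTerm_sub_eq f (j + 1) m hx hy).ge) (fun x hx y hy => ?_)
  have hxy : |x - y| ≤ 1 / (2 * 2 ^ f (j + 1)) := by
    have := abs_sub_le_of_le_of_le hx.1 hx.2 hy.1 hy.2
    rwa [← sub_div, add_sub_cancel_left] at this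
  obtain ⟨hx₀, hx₁⟩ := tsum_lacunaryTerm_nat_add_mem_Icc f (j + 1) x
  obtain ⟨hy₀, hy₁⟩ := tsum_lacunaryTerm_nat_add_mem_Icc f (j + 1) y
  rw [add_sub_add_comm]
  refine (abs_add_le _ _).trans
    (add_le_add ?_ ((abs_sub_le_of_le_of_le hx₀ hx₁ hy₀ hy₁).trans_eq (sub_zero _)))
  calc _ ≤ 2 ^ (f j + 2) * |x - y| := abs_sum_lacunaryTerm_sub_le hf j x y
    _ ≤ 2 ^ (f j + 2) * (1 / (2 * 2 ^ f (j + 1))) := by gcongr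
    _ = 2 ^ (f j + 2) / (2 * 2 ^ f (j + 1)) := mul_one_div _ _

lemma volume_sep_lacunaryWave_le {f : ℕ → ℕ} (hf : StrictMono f) {j : ℕ}
    (hgap : f j + ((j + 2) ^ 2 + j + 2) ≤ f (j + 1)) {a b c e : ℝ}
    (hab : 2⁻¹ ^ f (j + 1) ≤ b - a) (hce : e - c ≤ 2⁻¹ ^ (j + 1) * lacunaryCoeff (j + 1)) :
    volume {z ∈ Icc a b | lacunaryWave f z ∈ Icc c e} ≤
      ENNReal.ofReal (6 * 2⁻¹ ^ (j + 1)) * volume (Icc a b) := by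
  have hΛ := two_pow_div_le_of_gap hgap
  set k := j + 1
  set M : ℝ := 2 * 2 ^ f k
  set ε : ℝ := 2⁻¹ ^ k * lacunaryCoeff k
  have hM : 0 < M := by positivity
  have hck := lacunaryCoeff_pos k
  have hbM : 2 ≤ (b - a) * M := by
    calc (2 : ℝ) = 2⁻¹ ^ f k * M := by rw [mul_left_comm, ← mul_pow]; norm_num
      _ ≤ (b - a) * M := by gcongr
  calc volume {z ∈ Icc a b | lacunaryWave f z ∈ Icc c e}
      ≤ ENNReal.ofReal ((b - a) * M + 2) *
          ENNReal.ofReal ((e - c + (2 ^ (f j + 2) / M + ε)) / (lacunaryCoeff k * M)) :=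
        volume_sep_Icc_le_of_forall_Icc_intCast_div a b hM
          (volume_sep_Icc_intCast_div_lacunaryWave_le hf j · c e)
    _ ≤ ENNReal.ofReal (2 * ((b - a) * M)) * ENNReal.ofReal (3 * ε / (lacunaryCoeff k * M)) := by
        gcongr <;> linarith
    _ = ENNReal.ofReal (6 * 2⁻¹ ^ k) * volume (Icc a b) := by
        rw [Real.volume_Icc, ← ENNReal.ofReal_mul (by linarith : (0 : ℝ) ≤ 2 * ((b - a) * M)),
          ← ENNReal.ofReal_mul (by positivity : (0 : ℝ) ≤ 6 * 2⁻¹ ^ k)]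
        congr 1
        field_simp
        ring

def gappedSeq (N g : ℕ → ℕ) : ℕ → ℕ
  | 0 => N 0
  | j + 1 => max (gappedSeq N g j + g j) (N (j + 1))

lemma le_gappedSeq (N g : ℕ → ℕ) (j : ℕ) : N j ≤ gappedSeq N g j := by
  cases j <;> simp [gappedSeq]

lemma gappedSeq_add_le (N g : ℕ → ℕ) (j : ℕ) : gappedSeq N g j + g j ≤ gappedSeq N g (j + 1) :=
  le_max_left _ _

lemma strictMono_gappedSeq {g : ℕ → ℕ} (N : ℕ → ℕ) (hg : ∀ j, 0 < g j) :
    StrictMono (gappedSeq N g) :=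
  strictMono_nat_of_lt_succ fun j =>
    (Nat.lt_add_of_pos_right (hg j)).trans_le (gappedSeq_add_le N g j)

lemma exists_monotone_index_of_strictMono {f : ℕ → ℕ} (hf : StrictMono f) :
    ∃ κ : ℕ → ℕ, Monotone κ ∧ Tendsto κ atTop atTop ∧
      ∀ n j, κ n = j + 1 → f j ≤ n ∧ n < f (j + 1) := by
  classical
  have hex (n : ℕ) : ∃ k, n < f k := ⟨n + 1, (Nat.lt_succ_self n).trans_le hf.le_apply⟩
  refine ⟨fun n => Nat.find (hex n), fun n m hnm => Nat.find_mono fun k hk => hnm.trans_lt hk,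
    tendsto_atTop_atTop.2 fun K => ⟨f K, fun n hn => ?_⟩,
    fun n j hj => ⟨?_, hj ▸ Nat.find_spec (hex n)⟩⟩
  · exact (hf.lt_iff_lt.1 (hn.trans_lt (Nat.find_spec (hex n)))).le
  · exact not_lt.1 (Nat.find_min (hex n) (by simp only at hj; omega))

theorem stmt11_general (s : ℕ → ℝ) (hlim : Tendsto s atTop (𝓝 0)) :
    ∃ (q : ℕ → ℝ) (φ : ℝ → ℝ), Antitone q ∧ Tendsto q atTop (𝓝 0) ∧
      Continuous φ ∧ MapsTo φ (Icc 0 1) (Icc 0 1) ∧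
      ∀ (n : ℕ) (a b c e : ℝ), Icc a b ⊆ Icc 0 1 → b - a = 2⁻¹ ^ n → e - c = s n →
        volume {z ∈ Icc a b | φ z ∈ Icc c e} ≤
          ENNReal.ofReal (q n) * volume (Icc a b) := by
  have hN (k : ℕ) : ∃ N, ∀ n ≥ N, s n ≤ 2⁻¹ ^ k * lacunaryCoeff k :=
    eventually_atTop.1 (hlim.eventually (ge_mem_nhds (by have := lacunaryCoeff_pos k; positivity)))
  choose N hN using hN
  set f := gappedSeq (fun j => N (j + 1)) (fun j => (j + 2) ^ 2 + j + 2)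
  have hf : StrictMono f := strictMono_gappedSeq _ fun j => by positivity
  obtain ⟨κ, hκ, hκtop, hκf⟩ := exists_monotone_index_of_strictMono hf
  refine ⟨fun n => 6 * 2⁻¹ ^ κ n, lacunaryWave f, fun n m hnm => ?_, ?_, continuous_lacunaryWave f,
    fun x _ => lacunaryWave_mem_Icc f x, fun n a b c e _ hab hce => ?_⟩
  · exact mul_le_mul_of_nonneg_left (pow_le_pow_of_le_one (by norm_num) (by norm_num) (hκ hnm))
      (by norm_num)
  · simpa using ((tendsto_pow_atTop_nhds_zero_of_lt_one (by norm_num : (0 : ℝ) ≤ 2⁻¹)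
      (by norm_num)).comp hκtop).const_mul 6
  · beta_reduce
    rcases hk : κ n with _ | j
    · calc volume {z ∈ Icc a b | lacunaryWave f z ∈ Icc c e} ≤ volume (Icc a b) :=
            measure_mono (sep_subset _ _)
        _ ≤ ENNReal.ofReal (6 * 2⁻¹ ^ 0) * volume (Icc a b) :=
            le_mul_of_one_le_left' (by norm_num)
    · obtain ⟨hjn, hnj⟩ := hκf n j hk
      exact volume_sep_lacunaryWave_le hf (gappedSeq_add_le _ _ j)
        (hab.trans_ge (pow_le_pow_of_le_one (by norm_num) (by norm_num) hnj.le))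
        (hce.trans_le (hN _ _ ((le_gappedSeq _ _ j).trans hjn)))

/-- Equidistribution lemma: given `s_n ↓ 0` there exist `q_n ↓ 0` and a
continuous `φ : [0,1] → [0,1]` such that for every `n`, every subinterval `I` of
`[0,1]` of length `2^{-n}` and every interval `J` of length `s_n` satisfy
`λ({z ∈ I : φ z ∈ J}) ≤ q_n · λ(I)`. -/
theorem stmt11 (s : ℕ → ℝ) (hanti : Antitone s) (hlim : Tendsto s atTop (𝓝 0)) :
    ∃ (q : ℕ → ℝ) (φ : ℝ → ℝ), Antitone q ∧ Tendsto q atTop (𝓝 0) ∧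
      Continuous φ ∧ MapsTo φ (Icc 0 1) (Icc 0 1) ∧
      ∀ (n : ℕ) (a b c e : ℝ), Icc a b ⊆ Icc 0 1 → b - a = 2⁻¹ ^ n → e - c = s n →
        volume {z ∈ Icc a b | φ z ∈ Icc c e} ≤
          ENNReal.ofReal (q n) * volume (Icc a b) :=
  stmt11_general s hlim
end

section
/- Let d ≥ 2. The set of f ∈ Homeo([0,1]^d) such that for every x ∈ [0,1]^d, limsup_{y→x} |f(x) - f(y)| / |x - y| = ∞, is a comeager subset of Homeo([0,1]^d). In particular, the generic homeomorphism of [0,1]^d is nowhere differentiable. -/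
open MeasureTheory Metric Set Filter Topology

/-- The space of homeomorphisms of the cube `[0,1]^d`, as a subspace of the
space of continuous self-maps of the cube (with the uniform topology). -/
def HomeoCube (d : ℕ) : Type := {g : C(↥(cube d), ↥(cube d)) // IsHomeomorph g}

noncomputable instance (d : ℕ) : TopologicalSpace (HomeoCube d) :=
  instTopologicalSpaceSubtype

/-!
Call `f` steep at scale `K` if every `x` has a `y` with `dist x y < K⁻¹` and
`dist (f x) (f y) > K * dist x y`. The set in question contains the intersection over `n` of the
sets of homeomorphisms that are steep at scale `n + 1`. Each of these is open because the cube is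
compact, and dense by the following perturbation.

If a homeomorphism `Φ` of the cube moves points by at most `3 A` and every `p` has a `q` with
`dist p q ≤ σ` and `dist (Φ p) (Φ q) ≥ A / 2`, then `Φ ∘ f` is steep as soon as `σ` is small
compared with the modulus of uniform continuity of `f⁻¹`. Since `d ≥ 2`, such a `Φ` exists for every
`σ`, with `A` fixed: it replaces the first coordinate `u` by `m u + A * w v`, where `w` oscillates
between `0` and `1` with period `σ` in the second coordinate `v`, and `m` is a piecewise linear
homeomorphism of `[0, 1]` that maps `[σ, 1 - σ]` onto `[2 A, 1 - 2 A]`. Away from the faces,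
moving `v` by `σ` changes `w v` by `1`; within `σ` of a face, the steepness of `m` does the job. The
shift `A * w v` is tapered off near the faces so that `Φ` stays injective and preserves the cube.
-/

section Steep

variable {X Y Z : Type*} [PseudoMetricSpace X] [PseudoMetricSpace Y] [PseudoMetricSpace Z]

def IsSteep (K : ℝ) (f : X → Y) : Prop :=
  ∀ x, ∃ y, dist x y < K⁻¹ ∧ K * dist x y < dist (f x) (f y)

theorem isOpen_setOf_isSteep [CompactSpace X] (K : ℝ) :
    IsOpen {f : C(X, Y) | IsSteep K f} := by
  set U := {p : C(X, Y) × X | ∃ y, dist p.2 y < K⁻¹ ∧ K * dist p.2 y < dist (p.1 p.2) (p.1 y)}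
  have hU : IsOpen U := by
    simp only [U, ofPred_exists, ofPred_and]
    refine isOpen_iUnion fun y ↦
      (isOpen_lt (by fun_prop) continuous_const).inter (isOpen_lt (by fun_prop) ?_)
    exact continuous_eval.dist ((continuous_eval_const y).comp continuous_fst)
  have hcompl : {f : C(X, Y) | IsSteep K f} = (Prod.fst '' Uᶜ)ᶜ := by
    ext f
    simp [IsSteep, U]
  rw [hcompl]
  exact (isClosedMap_fst_of_compactSpace _ hU.isClosed_compl).isOpen_compl

theorem exists_isSteep_comp [CompactSpace Y] (e : X ≃ₜ Y) {K s : ℝ} (hK : 0 < K) (hs : 0 < s) :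
    ∃ σ > 0, ∀ Φ : Y → Z, (∀ p, ∃ q, dist p q ≤ σ ∧ s ≤ dist (Φ p) (Φ q)) →
      IsSteep K (Φ ∘ e) := by
  obtain ⟨σ, hσ, he⟩ := Metric.uniformContinuous_iff.1
    (CompactSpace.uniformContinuous_of_continuous e.symm.continuous) (min K⁻¹ (s / K))
    (lt_min (inv_pos.2 hK) (div_pos hs hK))
  refine ⟨σ / 2, half_pos hσ, fun Φ hΦ x ↦ ?_⟩
  obtain ⟨q, hq, hsq⟩ := hΦ (e x)
  have hxy : dist x (e.symm q) < min K⁻¹ (s / K) := by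
    simpa using he (hq.trans_lt (half_lt_self hσ))
  refine ⟨e.symm q, hxy.trans_le (min_le_left _ _), ?_⟩
  calc K * dist x (e.symm q) < K * (s / K) :=
        mul_lt_mul_of_pos_left (hxy.trans_le (min_le_right _ _)) hK
    _ = s := mul_div_cancel₀ s hK.ne'
    _ ≤ dist ((Φ ∘ e) x) ((Φ ∘ e) (e.symm q)) := by simpa using hsq

theorem frequently_lt_div_dist_of_isSteep {X : Type*} [MetricSpace X] {f : X → Y}
    (hf : ∀ n : ℕ, IsSteep (n + 1) f) (x : X) (C : ℝ) :
    ∃ᶠ y in 𝓝[≠] x, C < dist (f x) (f y) / dist x y := by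
  rw [Metric.nhdsWithin_basis_ball.frequently_iff]
  intro ε hε
  obtain ⟨n, hn⟩ := exists_nat_gt (max C ε⁻¹)
  obtain ⟨y, hy, hfy⟩ := hf n x
  have hn₁ : (0 : ℝ) < n + 1 := by positivity
  have hxy : 0 < dist x y := by
    by_contra! h
    rw [dist_le_zero.1 h, dist_self, dist_self, mul_zero] at hfy
    exact lt_irrefl _ hfy
  have hεn : ((n : ℝ) + 1)⁻¹ < ε := by
    rw [inv_lt_comm₀ hn₁ hε]; linarith [le_max_right C ε⁻¹]
  refine ⟨y, ⟨mem_ball'.2 (hy.trans hεn), (dist_pos.1 hxy).symm⟩, ?_⟩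
  rw [lt_div_iff₀ hxy]
  nlinarith [le_max_left C ε⁻¹]

end Steep

theorem exists_Icc_subset_unitInterval {v r : ℝ} (hv : v ∈ Icc (0 : ℝ) 1) (hr₀ : 0 ≤ r)
    (hr₁ : r ≤ 1) : ∃ b, v ∈ Icc b (b + r) ∧ Icc b (b + r) ⊆ Icc (0 : ℝ) 1 := by
  refine ⟨min v (1 - r), ⟨min_le_left _ _, ?_⟩, Icc_subset_Icc (le_min hv.1 (by linarith)) ?_⟩
  · rcases le_total v (1 - r) with h | h
    · rw [min_eq_left h]; linarith
    · rw [min_eq_right h]; linarith [hv.2]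
  · linarith [min_le_right v (1 - r)]

theorem half_abs_sub_le_or (θ x y : ℝ) : |x - y| / 2 ≤ |θ - x| ∨ |x - y| / 2 ≤ |θ - y| := by
  by_contra! h
  linarith [abs_sub_le x θ y, abs_sub_comm x θ]

section StretchEnds

-- the piecewise linear map through `(0, 0)`, `(a, α)`, `(1 - a, 1 - α)` and `(1, 1)`
noncomputable def stretchEnds (a α t : ℝ) : ℝ :=
  max (min (α / a * t) (α + (1 - 2 * α) / (1 - 2 * a) * (t - a))) (1 - α / a * (1 - t))

theorem continuous_stretchEnds (a α : ℝ) : Continuous (stretchEnds a α) := by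
  unfold stretchEnds; fun_prop

variable {a α : ℝ} (ha : 0 < a) (haα : a ≤ α) (hα : α < 1 / 2)
include ha haα hα

theorem stretchEnds_slopes :
    0 < (1 - 2 * α) / (1 - 2 * a) ∧ (1 - 2 * α) / (1 - 2 * a) ≤ 1 ∧ 1 ≤ α / a ∧
      (1 - 2 * α) / (1 - 2 * a) * (1 - 2 * a) = 1 - 2 * α := by
  refine ⟨div_pos (by linarith) (by linarith), (div_le_one (by linarith)).2 (by linarith),
    (one_le_div ha).2 haα, div_mul_cancel₀ _ (by linarith)⟩

theorem strictMono_stretchEnds : StrictMono (stretchEnds a α) := by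
  obtain ⟨hs, -, hαa, -⟩ := stretchEnds_slopes ha haα hα
  intro x y hxy
  unfold stretchEnds
  exact max_lt_max (min_lt_min (by nlinarith) (by nlinarith)) (by nlinarith)

theorem stretchEnds_zero : stretchEnds a α 0 = 0 := by
  obtain ⟨hs, hs1, hαa, -⟩ := stretchEnds_slopes ha haα hα
  unfold stretchEnds
  rw [min_eq_left (by nlinarith), max_eq_left (by nlinarith)]
  ring

theorem stretchEnds_one : stretchEnds a α 1 = 1 := by
  obtain ⟨hs, hs1, hαa, hsa⟩ := stretchEnds_slopes ha haα hα
  unfold stretchEnds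
  rw [min_eq_right (by nlinarith), max_eq_right (by nlinarith)]
  ring

theorem stretchEnds_of_mem_Icc {t : ℝ} (ht : t ∈ Icc a (1 - a)) :
    stretchEnds a α t = α + (1 - 2 * α) / (1 - 2 * a) * (t - a) := by
  obtain ⟨hs, hs1, hαa, hsa⟩ := stretchEnds_slopes ha haα hα
  obtain ⟨h1, h2⟩ := ht
  have hαa' : α / a * a = α := div_mul_cancel₀ _ ha.ne'
  unfold stretchEnds
  rw [min_eq_right (by nlinarith), max_eq_left (by nlinarith)]

theorem stretchEnds_self : stretchEnds a α a = α := by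
  rw [stretchEnds_of_mem_Icc ha haα hα ⟨le_rfl, by linarith⟩]; ring

theorem stretchEnds_one_sub_self : stretchEnds a α (1 - a) = 1 - α := by
  obtain ⟨-, -, -, hsa⟩ := stretchEnds_slopes ha haα hα
  rw [stretchEnds_of_mem_Icc ha haα hα ⟨by linarith, le_rfl⟩]; linarith

theorem stretchEnds_mem_Icc {t : ℝ} (ht : t ∈ Icc a (1 - a)) :
    stretchEnds a α t ∈ Icc α (1 - α) := by
  obtain ⟨hs, hs1, hαa, hsa⟩ := stretchEnds_slopes ha haα hα
  rw [stretchEnds_of_mem_Icc ha haα hα ht]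
  constructor <;> nlinarith [ht.1, ht.2]

theorem stretchEnds_mem_unitInterval {t : ℝ} (ht : t ∈ Icc (0 : ℝ) 1) :
    stretchEnds a α t ∈ Icc (0 : ℝ) 1 := by
  have hm := (strictMono_stretchEnds ha haα hα).monotone
  exact ⟨stretchEnds_zero ha haα hα ▸ hm ht.1, stretchEnds_one ha haα hα ▸ hm ht.2⟩

theorem abs_stretchEnds_sub_le {t : ℝ} (ht : t ∈ Icc (0 : ℝ) 1) :
    |stretchEnds a α t - t| ≤ α := by
  obtain ⟨hs, hs1, -, hsa⟩ := stretchEnds_slopes ha haα hα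
  have hm := (strictMono_stretchEnds ha haα hα).monotone
  have hma := stretchEnds_self ha haα hα
  have hmb := stretchEnds_one_sub_self ha haα hα
  rw [abs_le]
  rcases lt_or_ge t a with h | h
  · have hta := hm h.le
    have ht0 := hm ht.1
    rw [stretchEnds_zero ha haα hα] at ht0
    constructor <;> linarith [ht.1, ht.2]
  rcases le_or_gt t (1 - a) with h' | h'
  · rw [stretchEnds_of_mem_Icc ha haα hα ⟨h, h'⟩]
    constructor <;> nlinarith
  · have hta := hm h'.le
    have ht1 := hm ht.2
    rw [stretchEnds_one ha haα hα] at ht1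
    constructor <;> linarith [ht.1, ht.2]

end StretchEnds

section Plateau

noncomputable def plateau (w x : ℝ) : ℝ := min 1 (min (x / w) ((1 - x) / w))

theorem continuous_plateau (w : ℝ) : Continuous (plateau w) := by
  unfold plateau; fun_prop

variable {w : ℝ}

theorem plateau_zero (hw : 0 ≤ w) : plateau w 0 = 0 := by
  simp [plateau, hw]

theorem plateau_one (hw : 0 ≤ w) : plateau w 1 = 0 := by
  simp [plateau, hw]

theorem plateau_nonneg (hw : 0 ≤ w) {x : ℝ} (hx : x ∈ Icc (0 : ℝ) 1) : 0 ≤ plateau w x :=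
  le_min zero_le_one (le_min (div_nonneg hx.1 hw) (div_nonneg (by linarith [hx.2]) hw))

theorem plateau_le_one (x : ℝ) : plateau w x ≤ 1 := min_le_left _ _

theorem plateau_eq_one (hw : 0 < w) {x : ℝ} (hx : x ∈ Icc w (1 - w)) : plateau w x = 1 :=
  min_eq_left (le_min ((one_le_div hw).2 hx.1) ((one_le_div hw).2 (by linarith [hx.2])))

theorem plateau_le_add (hw : 0 < w) {x y : ℝ} (hxy : x ≤ y) :
    plateau w x ≤ plateau w y + (y - x) / w := by
  have hyx : 0 ≤ (y - x) / w := div_nonneg (by linarith) hw.le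
  have hx : x / w ≤ y / w + (y - x) / w := by
    rw [← add_div]; gcongr; linarith
  have hx' : (1 - x) / w = (1 - y) / w + (y - x) / w := by ring
  unfold plateau
  rw [← min_add_add_right, ← min_add_add_right]
  refine le_min ((min_le_left _ _).trans (by linarith)) (le_min ?_ ?_)
  · exact (min_le_right _ _).trans ((min_le_left _ _).trans hx)
  · exact (min_le_right _ _).trans ((min_le_right _ _).trans hx'.le)

noncomputable def plateauShift (w t x : ℝ) : ℝ := x + t * plateau w x

theorem strictMono_plateauShift (hw : 0 < w) {t : ℝ} (ht : 0 ≤ t) (htw : t < w) :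
    StrictMono (plateauShift w t) := by
  intro x y hxy
  have hb := mul_le_mul_of_nonneg_left (plateau_le_add hw hxy.le) ht
  have hshift : t * ((y - x) / w) < y - x := by
    rw [mul_div_assoc', div_lt_iff₀ hw]; nlinarith
  unfold plateauShift
  nlinarith

end Plateau

section Wave

open Real

noncomputable def wave (δ v : ℝ) : ℝ := (1 + cos (π * v / δ)) / 2

theorem continuous_wave (δ : ℝ) : Continuous (wave δ) := by
  unfold wave; fun_prop

theorem wave_mem_Icc (δ v : ℝ) : wave δ v ∈ Icc (0 : ℝ) 1 := by
  unfold wave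
  constructor <;> linarith [neg_one_le_cos (π * v / δ), cos_le_one (π * v / δ)]

theorem abs_wave_sub_wave_succ {δ : ℝ} (hδ : δ ≠ 0) (k : ℤ) :
    |wave δ (δ * k) - wave δ (δ * (k + 1))| = 1 := by
  have h₁ : π * (δ * k) / δ = k * π := by field_simp
  have h₂ : π * (δ * (k + 1)) / δ = k * π + π := by field_simp
  rw [wave, wave, h₁, h₂, cos_add_pi, ← abs_cos_int_mul_pi k]
  ring_nf

theorem exists_wave_sub_eq_one {δ : ℝ} (hδ : 0 < δ) (b : ℝ) :
    ∃ y₁ ∈ Icc b (b + 2 * δ), ∃ y₂ ∈ Icc b (b + 2 * δ), |wave δ y₁ - wave δ y₂| = 1 := by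
  set k := ⌈b / δ⌉
  have hk₁ : b ≤ δ * k := by
    rw [← div_le_iff₀' hδ]; exact Int.le_ceil _
  have hk₂ : δ * k < b + δ := by
    rw [← lt_div_iff₀' hδ, add_div, div_self hδ.ne']
    exact Int.ceil_lt_add_one (b / δ)
  exact ⟨δ * k, ⟨hk₁, by linarith⟩, δ * (k + 1), ⟨by nlinarith, by nlinarith⟩,
    abs_wave_sub_wave_succ hδ.ne' k⟩

end Wave

structure IsShearProfile (G : ℝ → ℝ → ℝ) : Prop where
  continuous : Continuous (Function.uncurry G)
  strictMono : ∀ v, StrictMono (G · v)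
  map_zero : ∀ v, G 0 v = 0
  map_one : ∀ v, G 1 v = 1

namespace IsShearProfile

variable {G : ℝ → ℝ → ℝ} (hG : IsShearProfile G)
include hG

theorem mem_Icc {u : ℝ} (hu : u ∈ Icc (0 : ℝ) 1) (v : ℝ) : G u v ∈ Icc (0 : ℝ) 1 := by
  have hm := (hG.strictMono v).monotone
  exact ⟨hG.map_zero v ▸ hm hu.1, hG.map_one v ▸ hm hu.2⟩

theorem exists_eq {r : ℝ} (hr : r ∈ Icc (0 : ℝ) 1) (v : ℝ) :
    ∃ u ∈ Icc (0 : ℝ) 1, G u v = r := by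
  have hc : ContinuousOn (G · v) (Icc 0 1) :=
    (hG.continuous.comp (continuous_id.prodMk continuous_const)).continuousOn
  have hivt := intermediate_value_Icc zero_le_one hc
  rw [hG.map_zero, hG.map_one] at hivt
  exact hivt hr

end IsShearProfile

noncomputable def shearProfile (A a u v : ℝ) : ℝ :=
  plateauShift (2 * A) (A * wave (a / 2) v) (stretchEnds a (2 * A) u)

section ShearProfile

variable {A a : ℝ} (ha : 0 < a) (haA : a ≤ 2 * A) (hA : A < 1 / 4)
include ha haA hA

theorem isShearProfile_shearProfile : IsShearProfile (shearProfile A a) := by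
  have hA0 : 0 < A := by linarith
  have hα : 2 * A < 1 / 2 := by linarith
  have hw : (0 : ℝ) ≤ 2 * A := by linarith
  refine ⟨?_, fun v ↦ ?_, fun v ↦ ?_, fun v ↦ ?_⟩
  · unfold shearProfile plateauShift
    have := continuous_stretchEnds a (2 * A)
    have := continuous_plateau (2 * A)
    have := continuous_wave (a / 2)
    fun_prop
  · have hc := wave_mem_Icc (a / 2) v
    exact (strictMono_plateauShift (by linarith) (by nlinarith [hc.1]) (by nlinarith [hc.2])).comp
      (strictMono_stretchEnds ha haA hα)
  · simp [shearProfile, plateauShift, stretchEnds_zero ha haA hα, plateau_zero hw]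
  · simp [shearProfile, plateauShift, stretchEnds_one ha haA hα, plateau_one hw]

theorem shearProfile_of_mem_Icc {u : ℝ} (hu : u ∈ Icc a (1 - a)) (v : ℝ) :
    shearProfile A a u v = stretchEnds a (2 * A) u + A * wave (a / 2) v := by
  have hm := stretchEnds_mem_Icc ha haA (by linarith) hu
  rw [shearProfile, plateauShift, plateau_eq_one (by linarith) hm, mul_one]

theorem abs_shearProfile_sub_le {u : ℝ} (hu : u ∈ Icc (0 : ℝ) 1) (v : ℝ) :
    |shearProfile A a u v - u| ≤ 3 * A := by
  have hm := abs_stretchEnds_sub_le ha haA (by linarith) hu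
  have hb := plateau_nonneg (w := 2 * A) (by linarith)
    (stretchEnds_mem_unitInterval ha haA (by linarith) hu)
  have hb1 := plateau_le_one (w := 2 * A) (stretchEnds a (2 * A) u)
  have hc := wave_mem_Icc (a / 2) v
  have hA0 : 0 ≤ A := by linarith
  have h1 : 0 ≤ A * wave (a / 2) v * plateau (2 * A) (stretchEnds a (2 * A) u) :=
    mul_nonneg (mul_nonneg hA0 hc.1) hb
  have h2 : A * wave (a / 2) v * plateau (2 * A) (stretchEnds a (2 * A) u) ≤ A := by
    calc _ ≤ A * 1 * 1 := by gcongr; exact hc.2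
      _ = A := by ring
  rw [abs_le] at hm ⊢
  rw [shearProfile, plateauShift]
  constructor <;> linarith [hm.1, hm.2]

theorem exists_shearProfile_far {u v : ℝ} (hu : u ∈ Icc (0 : ℝ) 1) (hv : v ∈ Icc (0 : ℝ) 1) :
    ∃ u' ∈ Icc (0 : ℝ) 1, ∃ v' ∈ Icc (0 : ℝ) 1, dist u u' + dist v v' ≤ a ∧
      A / 2 ≤ |shearProfile A a u v - shearProfile A a u' v'| := by
  have hA0 : 0 < A := by linarith
  have hG := isShearProfile_shearProfile ha haA hA
  set S := {p : ℝ × ℝ | p.1 ∈ Icc (0 : ℝ) 1 ∧ p.2 ∈ Icc (0 : ℝ) 1 ∧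
    dist u p.1 + dist v p.2 ≤ a}
  suffices ∃ p ∈ S, ∃ q ∈ S, A ≤ |shearProfile A a p.1 p.2 - shearProfile A a q.1 q.2| by
    obtain ⟨p, ⟨hp₁, hp₂, hp⟩, q, ⟨hq₁, hq₂, hq⟩, hpq⟩ := this
    rcases half_abs_sub_le_or (shearProfile A a u v) (shearProfile A a p.1 p.2)
      (shearProfile A a q.1 q.2) with h | h
    exacts [⟨p.1, hp₁, p.2, hp₂, hp, by linarith⟩, ⟨q.1, hq₁, q.2, hq₂, hq, by linarith⟩]
  -- near a face, `u` moves to the face or to distance `a` from it; otherwise `v` moves from a crest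
  -- of the wave to a trough
  have hc := wave_mem_Icc (a / 2) v
  rcases lt_or_ge u a with hua | hua
  · have hdist : ∀ t ∈ Icc 0 a, dist u t ≤ a := fun t ht ↦ by
      simpa using Real.dist_le_of_mem_Icc ⟨hu.1, hua.le⟩ ht
    refine ⟨(0, v), ⟨⟨le_rfl, zero_le_one⟩, hv, by simpa using hdist 0 ⟨le_rfl, ha.le⟩⟩,
      (a, v), ⟨⟨ha.le, by linarith⟩, hv, by simpa using hdist a ⟨ha.le, le_rfl⟩⟩, ?_⟩
    rw [hG.map_zero, shearProfile_of_mem_Icc ha haA hA ⟨le_rfl, by linarith⟩,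
      stretchEnds_self ha haA (by linarith), abs_sub_comm, sub_zero]
    exact le_abs.2 (Or.inl (by nlinarith [hc.1]))
  rcases le_or_gt u (1 - a) with hub | hub
  · obtain ⟨b, hvb, hb⟩ := exists_Icc_subset_unitInterval hv ha.le (by linarith)
    obtain ⟨y₁, hy₁, y₂, hy₂, hy⟩ := exists_wave_sub_eq_one (half_pos ha) b
    rw [mul_div_cancel₀ a two_ne_zero] at hy₁ hy₂
    have hdist : ∀ y ∈ Icc b (b + a), dist v y ≤ a := fun y hy ↦ by
      simpa using Real.dist_le_of_mem_Icc hvb hy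
    refine ⟨(u, y₁), ⟨hu, hb hy₁, by simpa using hdist y₁ hy₁⟩,
      (u, y₂), ⟨hu, hb hy₂, by simpa using hdist y₂ hy₂⟩, ?_⟩
    rw [shearProfile_of_mem_Icc ha haA hA ⟨hua, hub⟩,
      shearProfile_of_mem_Icc ha haA hA ⟨hua, hub⟩, add_sub_add_left_eq_sub, ← mul_sub, abs_mul,
      hy, abs_of_pos hA0, mul_one]
  · have hdist : ∀ t ∈ Icc (1 - a) 1, dist u t ≤ a := fun t ht ↦ by
      simpa using Real.dist_le_of_mem_Icc ⟨hub.le, hu.2⟩ ht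
    refine ⟨(1, v), ⟨⟨zero_le_one, le_rfl⟩, hv, by simpa using hdist 1 ⟨by linarith, le_rfl⟩⟩,
      (1 - a, v), ⟨⟨by linarith, by linarith⟩, hv,
        by simpa using hdist (1 - a) ⟨le_rfl, by linarith⟩⟩, ?_⟩
    rw [hG.map_one, shearProfile_of_mem_Icc ha haA hA ⟨by linarith, le_rfl⟩,
      stretchEnds_one_sub_self ha haA (by linarith)]
    exact le_abs.2 (Or.inl (by nlinarith [hc.2]))

end ShearProfile

section Cube

variable {d : ℕ}

theorem cube_eq_image : cube d = WithLp.toLp 2 '' Set.univ.pi fun _ ↦ Icc (0 : ℝ) 1 := by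
  ext x
  exact ⟨fun hx ↦ ⟨x.ofLp, fun i _ ↦ hx i, rfl⟩, by rintro ⟨y, hy, rfl⟩ i; exact hy i trivial⟩

instance : CompactSpace (cube d) := by
  rw [← isCompact_iff_compactSpace, cube_eq_image]
  exact (isCompact_univ_pi fun _ ↦ isCompact_Icc).image (PiLp.continuous_toLp 2 _)

noncomputable def shiftCoord (i : Fin d) (c : ℝ) (x : EuclideanSpace ℝ (Fin d)) :
    EuclideanSpace ℝ (Fin d) :=
  x + c • EuclideanSpace.single i 1

variable {i k : Fin d} {c : ℝ} {x : EuclideanSpace ℝ (Fin d)}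

@[simp]
theorem shiftCoord_apply_self : shiftCoord i c x i = x i + c := by
  simp [shiftCoord]

@[simp]
theorem shiftCoord_apply_of_ne (h : k ≠ i) : shiftCoord i c x k = x k := by
  simp [shiftCoord, h]

theorem dist_shiftCoord_self : dist (shiftCoord i c x) x = |c| := by
  simp [shiftCoord, norm_smul, PiLp.norm_single]

theorem shiftCoord_mem_cube (hx : x ∈ cube d) (hc : x i + c ∈ Icc (0 : ℝ) 1) :
    shiftCoord i c x ∈ cube d := by
  intro k
  rcases eq_or_ne k i with rfl | h
  · simpa using hc
  · simpa [h] using hx k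

theorem exists_mem_cube_apply_eq_apply_eq (hx : x ∈ cube d) {j : Fin d} (hij : i ≠ j)
    {u v : ℝ} (hu : u ∈ Icc (0 : ℝ) 1) (hv : v ∈ Icc (0 : ℝ) 1) :
    ∃ y ∈ cube d, y i = u ∧ y j = v ∧ dist x y ≤ dist (x i) u + dist (x j) v := by
  have hx₁ := shiftCoord_mem_cube (i := i) (c := u - x i) hx (by simpa using hu)
  set x₁ := shiftCoord i (u - x i) x
  have hx₁j : x₁ j = x j := by simp [x₁, hij.symm]
  refine ⟨shiftCoord j (v - x₁ j) x₁, shiftCoord_mem_cube hx₁ (by simpa using hv),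
    by simp [x₁, hij], by simp, ?_⟩
  calc dist x (shiftCoord j (v - x₁ j) x₁)
    _ ≤ dist x x₁ + dist x₁ (shiftCoord j (v - x₁ j) x₁) := dist_triangle _ _ _
    _ = dist (x i) u + dist (x j) v := by
      rw [dist_comm, dist_shiftCoord_self, dist_comm, dist_shiftCoord_self, hx₁j,
        Real.dist_eq, Real.dist_eq, abs_sub_comm, abs_sub_comm v]

noncomputable def shear (G : ℝ → ℝ → ℝ) (i j : Fin d) (x : EuclideanSpace ℝ (Fin d)) :
    EuclideanSpace ℝ (Fin d) :=
  shiftCoord i (G (x i) (x j) - x i) x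

variable {G : ℝ → ℝ → ℝ} {j : Fin d}

@[simp]
theorem shear_apply_self : shear G i j x i = G (x i) (x j) := by
  simp [shear]

@[simp]
theorem shear_apply_of_ne (h : k ≠ i) : shear G i j x k = x k :=
  shiftCoord_apply_of_ne h

theorem dist_shear_self : dist (shear G i j x) x = |G (x i) (x j) - x i| :=
  dist_shiftCoord_self

theorem continuous_shear (hG : Continuous (Function.uncurry G)) : Continuous (shear G i j) := by
  have : Continuous fun x : EuclideanSpace ℝ (Fin d) ↦ G (x i) (x j) :=
    hG.comp (by fun_prop : Continuous fun x : EuclideanSpace ℝ (Fin d) ↦ (x i, x j))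
  unfold shear shiftCoord
  fun_prop

theorem shear_injective (hG : ∀ v, StrictMono (G · v)) (hij : i ≠ j) :
    Function.Injective (shear G i j) := by
  intro x y hxy
  have hother : ∀ k ≠ i, x k = y k := fun k hk ↦ by
    simpa [hk] using congrArg (· k) hxy
  have hi := congrArg (· i) hxy
  simp only [shear_apply_self, hother j hij.symm] at hi
  ext k
  rcases eq_or_ne k i with rfl | hk
  exacts [(hG (y j)).injective hi, hother k hk]

variable (hG : IsShearProfile G)
include hG

theorem shear_mem_cube (hx : x ∈ cube d) : shear G i j x ∈ cube d :=
  shiftCoord_mem_cube hx (by simpa using hG.mem_Icc (hx i) (x j))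

theorem exists_shear_eq (hij : i ≠ j) {y : EuclideanSpace ℝ (Fin d)} (hy : y ∈ cube d) :
    ∃ x ∈ cube d, shear G i j x = y := by
  obtain ⟨u, hu, hGu⟩ := hG.exists_eq (hy i) (y j)
  refine ⟨shiftCoord i (u - y i) y, shiftCoord_mem_cube hy (by simpa using hu), ?_⟩
  ext k
  rcases eq_or_ne k i with rfl | hk
  · simpa [hij.symm] using hGu
  · simp [hk]

noncomputable def cubeShear (i j : Fin d) : C(cube d, cube d) where
  toFun x := ⟨shear G i j x, shear_mem_cube hG x.2⟩
  continuous_toFun :=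
    ((continuous_shear hG.continuous).comp continuous_subtype_val).subtype_mk _

theorem isHomeomorph_cubeShear (hij : i ≠ j) : IsHomeomorph (cubeShear hG i j) := by
  refine isHomeomorph_iff_continuous_bijective.2 ⟨(cubeShear hG i j).continuous, ?_, ?_⟩
  · exact fun x y hxy ↦
      Subtype.ext (shear_injective hG.strictMono hij (congrArg Subtype.val hxy))
  · intro y
    obtain ⟨x, hx, hxy⟩ := exists_shear_eq hG hij y.2
    exact ⟨⟨x, hx⟩, Subtype.ext hxy⟩

end Cube

theorem exists_isHomeomorph_stretching {d : ℕ} {i j : Fin d} (hij : i ≠ j) {A a : ℝ}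
    (ha : 0 < a) (haA : a ≤ 2 * A) (hA : A < 1 / 4) :
    ∃ Φ : C(cube d, cube d), IsHomeomorph Φ ∧ (∀ z, dist (Φ z) z ≤ 3 * A) ∧
      ∀ p, ∃ q, dist p q ≤ a ∧ A / 2 ≤ dist (Φ p) (Φ q) := by
  have hG := isShearProfile_shearProfile ha haA hA
  refine ⟨cubeShear hG i j, isHomeomorph_cubeShear hG hij, fun z ↦ ?_, fun p ↦ ?_⟩
  · rw [Subtype.dist_eq]
    exact dist_shear_self.trans_le (abs_shearProfile_sub_le ha haA hA (z.2 i) _)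
  obtain ⟨u, hu, v, hv, hdist, hfar⟩ := exists_shearProfile_far ha haA hA (p.2 i) (p.2 j)
  obtain ⟨q, hq, hqi, hqj, hpq⟩ := exists_mem_cube_apply_eq_apply_eq p.2 hij hu hv
  refine ⟨⟨q, hq⟩, (Subtype.dist_eq _ _).trans_le (hpq.trans hdist), ?_⟩
  calc A / 2 ≤ |shearProfile A a (p.1 i) (p.1 j) - shearProfile A a u v| := hfar
    _ = dist (shear (shearProfile A a) i j p i) (shear (shearProfile A a) i j q i) := by
      rw [shear_apply_self, shear_apply_self, hqi, hqj, Real.dist_eq]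
    _ ≤ dist (shear (shearProfile A a) i j p) (shear (shearProfile A a) i j q) :=
      PiLp.dist_apply_le _ _ _
    _ = dist (cubeShear hG i j p) (cubeShear hG i j ⟨q, hq⟩) := rfl

namespace HomeoCube

variable {d : ℕ}

theorem exists_isSteep_dist_lt (hd : 2 ≤ d) (f : HomeoCube d) {K ε : ℝ} (hK : 0 < K)
    (hε : 0 < ε) : ∃ g : HomeoCube d, IsSteep K g.1 ∧ dist g.1 f.1 < ε := by
  have : Nontrivial (Fin d) := Fin.nontrivial_iff_two_le.2 hd
  obtain ⟨i, j, hij⟩ := exists_pair_ne (Fin d)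
  set A := min (ε / 4) (1 / 8)
  have hA : 0 < A := lt_min (by positivity) (by norm_num)
  have hAε : A ≤ ε / 4 := min_le_left _ _
  obtain ⟨σ, hσ, hsteep⟩ :=
    exists_isSteep_comp (Z := cube d) (f.2.homeomorph f.1) hK (half_pos hA)
  obtain ⟨Φ, hΦ, hclose, hstretch⟩ := exists_isHomeomorph_stretching hij (lt_min hσ (by linarith))
    (min_le_right σ (2 * A)) (by linarith [min_le_right (ε / 4) (1 / 8)])
  refine ⟨⟨Φ.comp f.1, hΦ.comp f.2⟩, hsteep Φ fun p ↦ ?_, ?_⟩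
  · obtain ⟨q, hq, hpq⟩ := hstretch p
    exact ⟨q, hq.trans (min_le_left _ _), hpq⟩
  · exact (ContinuousMap.dist_lt_iff hε).2 fun x ↦ (hclose (f.1 x)).trans_lt (by linarith)

theorem dense_setOf_isSteep (hd : 2 ≤ d) {K : ℝ} (hK : 0 < K) :
    Dense {f : HomeoCube d | IsSteep K f.1} := by
  refine IsInducing.subtypeVal.dense_iff.2 fun f ↦ Metric.mem_closure_iff.2 fun ε hε ↦ ?_
  obtain ⟨g, hg, hgf⟩ := exists_isSteep_dist_lt hd f hK hε
  exact ⟨g.1, mem_image_of_mem _ hg, by rwa [dist_comm]⟩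

end HomeoCube

/-- For `d ≥ 2`, the set of homeomorphisms `f` of `[0,1]^d` such that
`limsup_{y→x} |f(x) - f(y)| / |x - y| = ∞` at every point `x` is comeager;
in particular the generic homeomorphism of the cube is nowhere differentiable. -/
theorem stmt14 (d : ℕ) (hd : 2 ≤ d) :
    {f : HomeoCube d | ∀ x : ↥(cube d), ∀ C : ℝ,
        ∃ᶠ y in 𝓝[≠] x, C < dist (f.1 x) (f.1 y) / dist x y} ∈
      residual (HomeoCube d) := by
  have hsteep (n : ℕ) : {f : HomeoCube d | IsSteep (n + 1) f.1} ∈ residual (HomeoCube d) :=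
    residual_of_dense_open ((isOpen_setOf_isSteep _).preimage continuous_subtype_val)
      (HomeoCube.dense_setOf_isSteep hd (by positivity))
  filter_upwards [countable_iInter_mem.2 hsteep] with f hf
  exact frequently_lt_div_dist_of_isSteep (mem_iInter.1 hf)
end
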